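/- arXiv:2208.03555 — 2 statements merged into one kernel-verified Lean document; each statement's English description precedes it below -/
import Mathlib

section
/- For each L among MN, MNF, MNP, MND, MNPF, and MNDF, the set of theorems of L is decidable: there is an algorithm which, given a modal formula A, decides whether A is a theorem of L. -/
/-- Modal formulas: variables, ⊥, →, □. -/
inductive Fml : Type
  | var : ℕ → Fml
  | bot : Fml
  | imp : Fml → Fml → Fml
  | box : Fml → Fml
  deriving DecidableEq

namespace Fml

/-- ¬A is an abbreviation for A → ⊥. -/
def neg (A : Fml) : Fml := imp A bot

/-- ⊤ is an abbreviation for ¬⊥. -/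
def top : Fml := neg bot

/-- A ∧ B is an abbreviation for ¬(A → ¬B). -/
def and (A B : Fml) : Fml := neg (imp A (neg B))

/-- Uniform substitution. -/
def subst (σ : ℕ → Fml) : Fml → Fml
  | var n => σ n
  | bot => bot
  | imp A B => imp (subst σ A) (subst σ B)
  | box A => box (subst σ A)

end Fml

/-- A formula is a propositional tautology if it is true under every valuation
that respects ⊥ and →, treating variables and boxed formulas as atoms. -/
def IsTautology (A : Fml) : Prop :=
  ∀ val : Fml → Bool,
    (val Fml.bot = false) →
    (∀ B C : Fml, val (Fml.imp B C) = (!(val B) || val C)) →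
    val A = true

/-- Provability in the extension of the logic MN by the axioms in `Ax`:
axioms are all propositional tautologies and the members of `Ax`; the rules
are Modus Ponens, Necessitation, and RM. -/
inductive MNProv (Ax : Fml → Prop) : Fml → Prop
  | taut {A : Fml} : IsTautology A → MNProv Ax A
  | ax {A : Fml} : Ax A → MNProv Ax A
  | mp {A B : Fml} : MNProv Ax (A.imp B) → MNProv Ax A → MNProv Ax B
  | nec {A : Fml} : MNProv Ax A → MNProv Ax A.box
  | rm {A B : Fml} : MNProv Ax (A.imp B) → MNProv Ax (A.box.imp B.box)

/-- The axiom P : ¬□⊥. -/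
def AxP : Fml → Prop := fun A => A = (Fml.box Fml.bot).neg

/-- The axiom scheme D : ¬(□B ∧ □¬B). -/
def AxD : Fml → Prop := fun A => ∃ B : Fml, A = ((B.box).and (B.neg.box)).neg

/-- The axiom scheme 4 : □B → □□B. -/
def AxF : Fml → Prop := fun A => ∃ B : Fml, A = B.box.imp B.box.box

def MN : Fml → Prop := MNProv (fun _ => False)
def MNP : Fml → Prop := MNProv AxP
def MND : Fml → Prop := MNProv AxD
def MNF : Fml → Prop := MNProv AxF
def MNPF : Fml → Prop := MNProv (fun A => AxP A ∨ AxF A)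
def MNDF : Fml → Prop := MNProv (fun A => AxD A ∨ AxF A)

/-- An MN-frame: a nonempty set `W` together with a relation between worlds and
nonempty subsets of `W` satisfying monotonicity. -/
structure MNFrame (W : Type*) where
  nonempty : Nonempty W
  rel : W → Set W → Prop
  rel_nonempty : ∀ (x : W) (V : Set W), rel x V → V.Nonempty
  mono : ∀ (x : W) (V U : Set W), rel x V → V ⊆ U → rel x U

/-- `Sat` is a satisfaction relation on the MN-frame `F`. -/
structure IsSat {W : Type*} (F : MNFrame W) (Sat : W → Fml → Prop) : Prop where
  bot : ∀ x : W, ¬ Sat x Fml.bot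
  imp : ∀ (x : W) (A B : Fml), Sat x (A.imp B) ↔ (Sat x A → Sat x B)
  box : ∀ (x : W) (A : Fml), Sat x A.box ↔ ∀ V : Set W, F.rel x V → ∃ y ∈ V, Sat y A

/-- A formula is valid in an MN-frame if it is satisfied at every world under
every satisfaction relation on the frame. -/
def Valid {W : Type*} (F : MNFrame W) (A : Fml) : Prop :=
  ∀ Sat : W → Fml → Prop, IsSat F Sat → ∀ x : W, Sat x A

/-- Transitivity of an MN-frame. -/
def MNFrame.IsTransitive {W : Type*} (F : MNFrame W) : Prop :=
  ∀ (x : W) (V : Set W) (U : W → Set W),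
    F.rel x V → (∀ y ∈ V, F.rel y (U y)) → F.rel x (⋃ y ∈ V, U y)

/-- MNP-frames: every world is related to some subset. -/
def MNFrame.IsMNP {W : Type*} (F : MNFrame W) : Prop :=
  ∀ x : W, ∃ V : Set W, F.rel x V

/-- MND-frames: every world is related to `V` or to its complement. -/
def MNFrame.IsMND {W : Type*} (F : MNFrame W) : Prop :=
  ∀ (x : W) (V : Set W), F.rel x V ∨ F.rel x Vᶜ

/-- An explicit numerical encoding of modal formulas. -/
def encodeFml : Fml → ℕ
  | Fml.var n => 4 * n
  | Fml.bot => 1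
  | Fml.imp A B => 4 * Nat.pair (encodeFml A) (encodeFml B) + 2
  | Fml.box A => 4 * encodeFml A + 3

namespace S17


/-! ### Basic syntactic functions -/

def compatV (val : Fml → Bool) : Prop :=
  val .bot = false ∧ ∀ B C, val (.imp B C) = (!(val B) || val C)

def sub : Fml → List Fml
  | .var n => [.var n]
  | .bot => [.bot]
  | .imp B C => .imp B C :: (sub B ++ sub C)
  | .box B => .box B :: sub B

def varsF : Fml → List ℕ
  | .var n => [n]
  | .bot => []
  | .imp B C => varsF B ++ varsF C
  | .box B => varsF B

/-- evaluation of a formula under an assignment to variables and boxes -/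
def ev (lv : List ℕ) (lb : List Fml) : Fml → Bool
  | .var n => decide (n ∈ lv)
  | .bot => false
  | .imp B C => !(ev lv lb B) || ev lv lb C
  | .box B => decide (B ∈ lb)

def subsetsOf {α : Type*} : List α → List (List α)
  | [] => [[]]
  | a :: l => subsetsOf l ++ (subsetsOf l).map (a :: ·)

lemma self_mem_sub (B : Fml) : B ∈ sub B := by
  cases B <;> simp [sub]

lemma sub_trans : ∀ B C D : Fml, C ∈ sub B → D ∈ sub C → D ∈ sub B := by
  intro B
  induction B with
  | var n => intro C D hC hD; simp [sub] at hC; subst hC; simpa [sub] using hD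
  | bot => intro C D hC hD; simp [sub] at hC; subst hC; simpa [sub] using hD
  | imp B1 B2 ih1 ih2 =>
      intro C D hC hD
      simp [sub] at hC
      rcases hC with hC | hC | hC
      · subst hC; exact hD
      · exact List.mem_cons_of_mem _ (List.mem_append_left _ (ih1 C D hC hD))
      · exact List.mem_cons_of_mem _ (List.mem_append_right _ (ih2 C D hC hD))
  | box B1 ih =>
      intro C D hC hD
      simp [sub] at hC
      rcases hC with hC | hC
      · subst hC; exact hD
      · exact List.mem_cons_of_mem _ (ih C D hC hD)

lemma compat_ev (lv : List ℕ) (lb : List Fml) : compatV (ev lv lb) := ⟨rfl, fun _ _ => rfl⟩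

/-- evaluation agrees with any compatible valuation agreeing on atoms -/
lemma ev_agree {val : Fml → Bool} (hval : compatV val) (lv : List ℕ) (lb : List Fml) :
    ∀ B : Fml, (∀ n, (.var n) ∈ sub B → (decide (n ∈ lv) = val (.var n))) →
      (∀ c, (.box c) ∈ sub B → (decide (c ∈ lb) = val (.box c))) →
      ev lv lb B = val B := by
  intro B
  induction B with
  | var n => intro h1 _; simpa [ev] using h1 n (by simp [sub])
  | bot => intro _ _; simp [ev, hval.1]
  | imp B C ihB ihC =>
      intro h1 h2
      have hB := ihB
        (fun n hn => h1 n (List.mem_cons_of_mem _ (List.mem_append_left _ hn)))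
        (fun c hc => h2 c (List.mem_cons_of_mem _ (List.mem_append_left _ hc)))
      have hC := ihC
        (fun n hn => h1 n (List.mem_cons_of_mem _ (List.mem_append_right _ hn)))
        (fun c hc => h2 c (List.mem_cons_of_mem _ (List.mem_append_right _ hc)))
      simp [ev, hB, hC, hval.2]
  | box B _ =>
      intro _ h2
      simpa [ev] using h2 B (self_mem_sub _)

/-- every boolean "subset" of a list is represented in subsetsOf -/
lemma subsetsOf_complete {α : Type*} [DecidableEq α] (p : α → Bool) :
    ∀ L : List α, ∃ l ∈ subsetsOf L, (∀ x ∈ l, x ∈ L) ∧ ∀ x ∈ L, (decide (x ∈ l) = p x) := by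
  intro L
  induction L with
  | nil => exact ⟨[], by simp [subsetsOf], by simp, by simp⟩
  | cons a L ih =>
      obtain ⟨l, hl, hsub, hrep⟩ := ih
      by_cases hmem : a ∈ L
      · refine ⟨l, List.mem_append_left _ hl, fun x hx => List.mem_cons_of_mem _ (hsub x hx), ?_⟩
        intro x hx
        rcases List.mem_cons.1 hx with rfl | hx
        · exact hrep x hmem
        · exact hrep x hx
      · cases hpa : p a with
        | false =>
            refine ⟨l, List.mem_append_left _ hl,
              fun x hx => List.mem_cons_of_mem _ (hsub x hx), ?_⟩
            intro x hx
            rcases List.mem_cons.1 hx with rfl | hx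
            · have : x ∉ l := fun h => hmem (hsub x h)
              simp [this, hpa]
            · exact hrep x hx
        | true =>
            refine ⟨a :: l, List.mem_append_right _ (List.mem_map.2 ⟨l, hl, rfl⟩), ?_, ?_⟩
            · intro x hx
              rcases List.mem_cons.1 hx with rfl | hx
              · exact List.mem_cons_self
              · exact List.mem_cons_of_mem _ (hsub x hx)
            · intro x hx
              by_cases hxa : x = a
              · subst hxa; simp [hpa]
              · simp only [List.mem_cons, hxa, false_or]
                rcases List.mem_cons.1 hx with h | h
                · exact absurd h hxa
                · exact hrep x h

/-! ### The parametrized logic and a Hilbert-style toolkit -/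

def TC (l : List Fml) (X : Fml) : Prop :=
  ∀ val : Fml → Bool, compatV val → (∀ h ∈ l, val h = true) → val X = true

section Hilbert

variable (hP hD hF : Bool)

def axFlags : Fml → Prop := fun A =>
  (hP = true ∧ AxP A) ∨ (hD = true ∧ AxD A) ∨ (hF = true ∧ AxF A)

abbrev Prv : Fml → Prop := MNProv (axFlags hP hD hF)

variable {hP hD hF}

lemma taut_id (X : Fml) : IsTautology (X.imp X) := by
  intro val h0 h1; simp [h1]

lemma taut_top : IsTautology Fml.top := by
  intro val h0 h1; simp [Fml.top, Fml.neg, h1, h0]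

lemma prv_taut (h : IsTautology X) : Prv hP hD hF X := MNProv.taut h

lemma prv_imp_trans (h1 : Prv hP hD hF (Fml.imp X Y)) (h2 : Prv hP hD hF (Fml.imp Y Z)) :
    Prv hP hD hF (Fml.imp X Z) := by
  have ht : IsTautology ((X.imp Y).imp ((Y.imp Z).imp (X.imp Z))) := by
    intro val h0 hv
    simp only [hv]
    cases val X <;> cases val Y <;> cases val Z <;> simp
  exact MNProv.mp (MNProv.mp (MNProv.taut ht) h1) h2

lemma prv_box_top : Prv hP hD hF (Fml.top.box) := MNProv.nec (MNProv.taut taut_top)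

/-- with flag F, from ⊢ □u → w we get ⊢ □u → □w -/
lemma prv_boximp (hf : hF = true) (h : Prv hP hD hF (Fml.imp (Fml.box u) w)) :
    Prv hP hD hF (Fml.imp (Fml.box u) (Fml.box w)) := by
  have h4 : Prv hP hD hF (Fml.imp (Fml.box u) (Fml.box (Fml.box u))) :=
    MNProv.ax (Or.inr (Or.inr ⟨hf, ⟨u, rfl⟩⟩))
  exact prv_imp_trans h4 (MNProv.rm h)

/-- soundness of the reach-constraint hypotheses -/
lemma prv_reach_boxbox
    (h : Prv hP hD hF (Fml.imp u w) ∨ (hF = true ∧ Prv hP hD hF (Fml.imp (Fml.box u) w))) :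
    Prv hP hD hF (Fml.imp (Fml.box u) (Fml.box w)) := by
  rcases h with h | ⟨hf, h⟩
  · exact MNProv.rm h
  · exact prv_boximp hf h

/-- from ⊢ □a → □(b.neg) and flag D, get ⊢ □a → (□b).neg -/
lemma prv_orth_core (hd : hD = true)
    (h : Prv hP hD hF (Fml.imp (Fml.box a) (Fml.box (Fml.neg b)))) :
    Prv hP hD hF (Fml.imp (Fml.box a) (Fml.neg (Fml.box b))) := by
  have hDax : Prv hP hD hF (((b.box).and (b.neg.box)).neg) :=
    MNProv.ax (Or.inr (Or.inl ⟨hd, ⟨b, rfl⟩⟩))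
  set X := Fml.box a
  set W := Fml.box b
  set Z := Fml.box (Fml.neg b)
  have ht : IsTautology ((X.imp Z).imp ((((W.and Z)).neg).imp (X.imp W.neg))) := by
    intro val h0 h1
    simp only [Fml.and, Fml.neg, h1, h0]
    cases val X <;> cases val W <;> cases val Z <;> simp
  exact MNProv.mp (MNProv.mp (MNProv.taut ht) h) hDax

/-- soundness of the orth-constraint hypotheses: each certificate gives ⊢ □u → ¬□w -/
lemma prv_orth_boxbox (hd : hD = true)
    (h : Prv hP hD hF (Fml.imp u (Fml.neg w)) ∨
      (hF = true ∧ (Prv hP hD hF (Fml.imp (Fml.box u) (Fml.neg w)) ∨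
        Prv hP hD hF (Fml.imp (Fml.box w) (Fml.neg u)) ∨
        Prv hP hD hF (Fml.imp (Fml.box u) (Fml.neg (Fml.box w)))))) :
    Prv hP hD hF (Fml.imp (Fml.box u) (Fml.neg (Fml.box w))) := by
  rcases h with h | ⟨hf, h | h | h⟩
  · exact prv_orth_core hd (MNProv.rm h)
  · exact prv_orth_core hd (prv_boximp hf h)
  · -- ⊢ □w → ¬u gives ⊢ □w → ¬□u, then flip
    have h1 : Prv hP hD hF (Fml.imp (Fml.box w) (Fml.neg (Fml.box u))) :=
      prv_orth_core hd (prv_boximp hf h)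
    have ht : IsTautology ((Fml.imp (Fml.box w) (Fml.neg (Fml.box u))).imp
        (Fml.imp (Fml.box u) (Fml.neg (Fml.box w)))) := by
      intro val h0 h1
      simp only [Fml.neg, h1, h0]
      cases val (Fml.box w) <;> cases val (Fml.box u) <;> simp
    exact MNProv.mp (MNProv.taut ht) h1
  · exact h

/-- a tautological consequence of provable formulas is provable -/
lemma prv_of_TC : ∀ (l : List Fml), (∀ h ∈ l, Prv hP hD hF h) → ∀ X, TC l X → Prv hP hD hF X := by
  intro l
  induction l with
  | nil =>
      intro _ X hTC
      exact MNProv.taut (fun val h0 h1 => hTC val ⟨h0, h1⟩ (by simp))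
  | cons h t ih =>
      intro hprv X hTC
      have hTC' : TC t (h.imp X) := by
        intro val hc hl
        have himp := hc.2 h X
        cases hh : val h with
        | false => simp [himp, hh]
        | true =>
            have := hTC val hc (by
              intro g hg
              rcases List.mem_cons.1 hg with rfl | hg
              · exact hh
              · exact hl g hg)
            simp [himp, hh, this]
      have := ih (fun g hg => hprv g (List.mem_cons_of_mem _ hg)) (h.imp X) hTC'
      exact MNProv.mp this (hprv h (List.mem_cons_self))

end Hilbert
/-! ### The decision algorithm, at the level of formulas -/

section Algo

variable (hP hD hF : Bool) (A : Fml)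

def SLf : List Fml :=
  .bot :: .top :: (sub A).filterMap (fun B => match B with | .box c => some c | _ => none)

def vsL : List ℕ := varsF A ++ (SLf A).flatMap varsF

def GLf : List Fml := (SLf A).flatMap fun u => (SLf A).flatMap fun w =>
  [u.imp w, u.box.imp w, u.imp w.neg, u.box.imp w.neg, u.box.imp w.box.neg]

def reach (T : List Fml) (u w : Fml) : Bool :=
  decide (u.imp w ∈ T) || (hF && decide (u.box.imp w ∈ T))

def orth (T : List Fml) (u w : Fml) : Bool :=
  decide (u.imp w.neg ∈ T) ||
    (hF && (decide (u.box.imp w.neg ∈ T) || decide (w.box.imp u.neg ∈ T) ||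
      decide (u.box.imp w.box.neg ∈ T)))

def hypL (T : List Fml) : List Fml :=
  Fml.top.box :: ((if hP then [(Fml.bot.box).neg] else []) ++
    ((SLf A).flatMap fun u => (SLf A).flatMap fun w =>
      (if reach hF T u w then [(u.box).imp (w.box)] else []) ++
      (if hD && orth hF T u w then [(u.box).imp ((w.box).neg)] else [])))

def chk (T : List Fml) (X : Fml) : Bool :=
  (subsetsOf (vsL A)).all fun lv => (subsetsOf (SLf A)).all fun lb =>
    !((hypL hP hD hF A T).all fun h => ev lv lb h) || ev lv lb X

def stepT (T : List Fml) : List Fml := (GLf A).filter (fun X => chk hP hD hF A T X)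

def satT : ℕ → List Fml := fun n => n.rec [] (fun _ T => stepT hP hD hF A T)

def TstarL : List Fml := satT hP hD hF A ((GLf A).length + 1)

def mainB : Bool := chk hP hD hF A (TstarL hP hD hF A) A

end Algo
/-! ### Membership and closure facts -/

section AlgoFacts

variable {hP hD hF : Bool} {A X : Fml} {T : List Fml}

lemma mem_SLf_bot : Fml.bot ∈ SLf A := by simp [SLf]

lemma mem_SLf_top : Fml.top ∈ SLf A := by simp [SLf]

lemma mem_SLf_of_box_sub {c : Fml} (h : Fml.box c ∈ sub A) : c ∈ SLf A := by
  simp only [SLf, List.mem_cons, List.mem_filterMap]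
  right; right
  exact ⟨Fml.box c, h, rfl⟩

lemma SLf_cases {u : Fml} (hu : u ∈ SLf A) :
    u = Fml.bot ∨ u = Fml.top ∨ Fml.box u ∈ sub A := by
  simp only [SLf, List.mem_cons, List.mem_filterMap] at hu
  rcases hu with h | h | ⟨B, hB, hBu⟩
  · exact Or.inl h
  · exact Or.inr (Or.inl h)
  · right; right
    cases B <;> simp at hBu
    subst hBu; exact hB

lemma var_mem_varsF : ∀ (X : Fml) (n : ℕ), Fml.var n ∈ sub X → n ∈ varsF X := by
  intro X
  induction X with
  | var m => intro n h; simp [sub] at h; simp [varsF, h]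
  | bot => intro n h; simp [sub] at h
  | imp B C ihB ihC =>
      intro n h
      simp only [sub, List.mem_cons, List.mem_append] at h
      rcases h with h | h | h
      · exact absurd h (by simp)
      · exact List.mem_append_left _ (ihB n h)
      · exact List.mem_append_right _ (ihC n h)
  | box B ih =>
      intro n h
      simp only [sub, List.mem_cons] at h
      rcases h with h | h
      · exact absurd h (by simp)
      · exact ih n h

/-- the two closure conditions used in the bridge lemma -/
def OKf (A X : Fml) : Prop :=
  (∀ n, Fml.var n ∈ sub X → n ∈ vsL A) ∧ (∀ c, Fml.box c ∈ sub X → c ∈ SLf A)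

lemma OK_A : OKf A A := by
  constructor
  · intro n h; exact List.mem_append_left _ (var_mem_varsF A n h)
  · intro c h; exact mem_SLf_of_box_sub h

lemma OK_SLf {u : Fml} (hu : u ∈ SLf A) : OKf A u := by
  rcases SLf_cases hu with rfl | rfl | hbox
  · exact ⟨fun n h => by simp [sub] at h, fun c h => by simp [sub] at h⟩
  · exact ⟨fun n h => by simp [Fml.top, Fml.neg, sub] at h,
      fun c h => by simp [Fml.top, Fml.neg, sub] at h⟩
  · constructor
    · intro n h
      have : Fml.var n ∈ sub A :=
        sub_trans A _ _ hbox (List.mem_cons_of_mem _ h)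
      refine List.mem_append_right _ ?_
      exact List.mem_flatMap.2 ⟨u, hu, var_mem_varsF u n h⟩
    · intro c h
      exact mem_SLf_of_box_sub (sub_trans A _ _ hbox (List.mem_cons_of_mem _ h))

lemma OK_bot : OKf A Fml.bot :=
  ⟨fun n h => by simp [sub] at h, fun c h => by simp [sub] at h⟩

lemma OK_imp {Y : Fml} (h1 : OKf A X) (h2 : OKf A Y) : OKf A (X.imp Y) := by
  constructor
  · intro n h
    simp only [sub, List.mem_cons, List.mem_append] at h
    rcases h with h | h | h
    · exact absurd h (by simp)
    · exact h1.1 n h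
    · exact h2.1 n h
  · intro c h
    simp only [sub, List.mem_cons, List.mem_append] at h
    rcases h with h | h | h
    · exact absurd h (by simp)
    · exact h1.2 c h
    · exact h2.2 c h

lemma OK_neg (h1 : OKf A X) : OKf A X.neg := OK_imp h1 OK_bot

lemma OK_box {u : Fml} (hu : u ∈ SLf A) : OKf A u.box := by
  have h1 := OK_SLf (A := A) hu
  constructor
  · intro n h
    simp only [sub, List.mem_cons] at h
    rcases h with h | h
    · exact absurd h (by simp)
    · exact h1.1 n h
  · intro c h
    simp only [sub, List.mem_cons] at h
    rcases h with h | h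
    · have : c = u := by cases h; rfl
      subst this; exact hu
    · exact h1.2 c h

lemma OK_GLf (h : X ∈ GLf A) : OKf A X := by
  simp only [GLf, List.mem_flatMap] at h
  obtain ⟨u, hu, w, hw, hX⟩ := h
  have hOKu := OK_SLf (A := A) hu
  have hOKw := OK_SLf (A := A) hw
  simp only [List.mem_cons, List.mem_singleton] at hX
  rcases hX with rfl | rfl | rfl | rfl | rfl | h
  · exact OK_imp hOKu hOKw
  · exact OK_imp (OK_box hu) hOKw
  · exact OK_imp hOKu (OK_neg hOKw)
  · exact OK_imp (OK_box hu) (OK_neg hOKw)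
  · exact OK_imp (OK_box hu) (OK_neg (OK_box hw))
  · exact absurd h (by simp)

lemma mem_hypL_iff {h : Fml} :
    h ∈ hypL hP hD hF A T ↔
      h = Fml.top.box ∨ (hP = true ∧ h = (Fml.bot.box).neg) ∨
        ∃ u ∈ SLf A, ∃ w ∈ SLf A,
          (reach hF T u w = true ∧ h = (u.box).imp (w.box)) ∨
          (hD = true ∧ orth hF T u w = true ∧ h = (u.box).imp ((w.box).neg)) := by
  simp only [hypL, List.mem_cons, List.mem_append, List.mem_flatMap]
  constructor
  · rintro (rfl | h | ⟨u, hu, w, hw, hmem⟩)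
    · exact Or.inl rfl
    · rcases hhp : hP with _ | _
      · rw [hhp] at h; simp at h
      · rw [hhp] at h; simp at h; exact Or.inr (Or.inl ⟨rfl, h⟩)
    · right; right
      refine ⟨u, hu, w, hw, ?_⟩
      rcases hmem with hm | hm
      · rcases hr : reach hF T u w with _ | _
        · rw [hr] at hm; simp at hm
        · rw [hr] at hm; simp at hm; exact Or.inl ⟨rfl, hm⟩
      · rcases hr : (hD && orth hF T u w) with _ | _
        · rw [hr] at hm; simp at hm
        · rw [hr] at hm; simp at hm
          simp only [Bool.and_eq_true] at hr
          exact Or.inr ⟨hr.1, hr.2, hm⟩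
  · rintro (rfl | ⟨hp, rfl⟩ | ⟨u, hu, w, hw, ⟨hr, rfl⟩ | ⟨hd, ho, rfl⟩⟩)
    · exact Or.inl rfl
    · exact Or.inr (Or.inl (by simp [hp]))
    · exact Or.inr (Or.inr ⟨u, hu, w, hw, Or.inl (by simp [hr])⟩)
    · exact Or.inr (Or.inr ⟨u, hu, w, hw, Or.inr (by simp [hd, ho])⟩)

lemma OK_hyp (hh : X ∈ hypL hP hD hF A T) : OKf A X := by
  rcases mem_hypL_iff.1 hh with rfl | ⟨_, rfl⟩ | ⟨u, hu, w, hw, ⟨_, rfl⟩ | ⟨_, _, rfl⟩⟩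
  · exact OK_box mem_SLf_top
  · exact OK_neg (OK_box mem_SLf_bot)
  · exact OK_imp (OK_box hu) (OK_box hw)
  · exact OK_imp (OK_box hu) (OK_neg (OK_box hw))

/-! ### The bridge between `chk` and tautological consequence -/

lemma chk_iff_TC (hOK : OKf A X) :
    chk hP hD hF A T X = true ↔ TC (hypL hP hD hF A T) X := by
  constructor
  · intro hchk val hc hhyp
    obtain ⟨lv, hlvmem, _, hlvrep⟩ := subsetsOf_complete (fun n => val (.var n)) (vsL A)
    obtain ⟨lb, hlbmem, _, hlbrep⟩ := subsetsOf_complete (fun c => val (.box c)) (SLf A)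
    have h1 := List.all_eq_true.1 hchk lv hlvmem
    have h2 := List.all_eq_true.1 h1 lb hlbmem
    have hagree : ∀ Y, OKf A Y → ev lv lb Y = val Y := by
      intro Y hOKY
      exact ev_agree hc lv lb Y
        (fun n hn => hlvrep n (hOKY.1 n hn))
        (fun c hcc => hlbrep c (hOKY.2 c hcc))
    have hall : ((hypL hP hD hF A T).all fun h => ev lv lb h) = true := by
      rw [List.all_eq_true]
      intro h hh
      rw [hagree h (OK_hyp hh)]
      exact hhyp h hh
    rw [hall] at h2
    simp only [Bool.not_true, Bool.false_or] at h2
    rw [← hagree X hOK]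
    exact h2
  · intro hTC
    rw [chk, List.all_eq_true]
    intro lv _
    rw [List.all_eq_true]
    intro lb _
    by_cases hall : ((hypL hP hD hF A T).all fun h => ev lv lb h) = true
    · have := hTC (ev lv lb) (compat_ev lv lb) (fun h hh => List.all_eq_true.1 hall h hh)
      simp [hall, this]
    · simp only [Bool.not_eq_true] at hall
      simp [hall]

end AlgoFacts
/-! ### Stabilization of the saturation sequence, and soundness -/

section Stab

variable {hP hD hF : Bool} {A X : Fml}

lemma reach_mono {T T' : List Fml} (hsub : ∀ x ∈ T, x ∈ T') {u w : Fml}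
    (h : reach hF T u w = true) : reach hF T' u w = true := by
  simp only [reach, Bool.or_eq_true, Bool.and_eq_true, decide_eq_true_eq] at h ⊢
  rcases h with h | ⟨h1, h2⟩
  · exact Or.inl (hsub _ h)
  · exact Or.inr ⟨h1, hsub _ h2⟩

lemma orth_mono {T T' : List Fml} (hsub : ∀ x ∈ T, x ∈ T') {u w : Fml}
    (h : orth hF T u w = true) : orth hF T' u w = true := by
  simp only [orth, Bool.or_eq_true, Bool.and_eq_true, decide_eq_true_eq] at h ⊢
  rcases h with h | ⟨h1, (h | h) | h⟩
  · exact Or.inl (hsub _ h)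
  · exact Or.inr ⟨h1, Or.inl (Or.inl (hsub _ h))⟩
  · exact Or.inr ⟨h1, Or.inl (Or.inr (hsub _ h))⟩
  · exact Or.inr ⟨h1, Or.inr (hsub _ h)⟩

lemma hyp_mono {T T' : List Fml} (hsub : ∀ x ∈ T, x ∈ T') {h : Fml}
    (hh : h ∈ hypL hP hD hF A T) : h ∈ hypL hP hD hF A T' := by
  rcases mem_hypL_iff.1 hh with h1 | h1 | ⟨u, hu, w, hw, ⟨hr, rfl⟩ | ⟨hd, ho, rfl⟩⟩
  · exact mem_hypL_iff.2 (Or.inl h1)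
  · exact mem_hypL_iff.2 (Or.inr (Or.inl h1))
  · exact mem_hypL_iff.2 (Or.inr (Or.inr ⟨u, hu, w, hw, Or.inl ⟨reach_mono hsub hr, rfl⟩⟩))
  · exact mem_hypL_iff.2 (Or.inr (Or.inr ⟨u, hu, w, hw, Or.inr ⟨hd, orth_mono hsub ho, rfl⟩⟩))

lemma chk_mono {T T' : List Fml} (hsub : ∀ x ∈ T, x ∈ T')
    (h : chk hP hD hF A T X = true) : chk hP hD hF A T' X = true := by
  rw [chk, List.all_eq_true]
  intro lv hlv
  rw [List.all_eq_true]
  intro lb hlb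
  have h2 := List.all_eq_true.1 (List.all_eq_true.1 h lv hlv) lb hlb
  by_cases hall : ((hypL hP hD hF A T').all fun h => ev lv lb h) = true
  · have hallT : ((hypL hP hD hF A T).all fun h => ev lv lb h) = true := by
      rw [List.all_eq_true]
      intro g hg
      exact List.all_eq_true.1 hall g (hyp_mono hsub hg)
    rw [hallT] at h2
    simp only [Bool.not_true, Bool.false_or] at h2
    simp [h2]
  · simp only [Bool.not_eq_true] at hall
    simp [hall]

lemma satT_sub_GLf {n : ℕ} (h : X ∈ satT hP hD hF A n) : X ∈ GLf A := by
  cases n with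
  | zero => exact absurd h (by simp [satT])
  | succ n => exact List.mem_of_mem_filter h

lemma satT_mono : ∀ n : ℕ, ∀ X ∈ satT hP hD hF A n, X ∈ satT hP hD hF A (n + 1) := by
  intro n
  induction n with
  | zero => intro X h; exact absurd h (by simp [satT])
  | succ n ih =>
      intro X h
      have h1 : X ∈ GLf A := List.mem_of_mem_filter h
      have h2 : chk hP hD hF A (satT hP hD hF A n) X = true := List.of_mem_filter h
      exact List.mem_filter.2 ⟨h1, chk_mono ih h2⟩

def seteq (hP hD hF : Bool) (A : Fml) (n : ℕ) : Prop :=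
  ∀ X, X ∈ satT hP hD hF A n ↔ X ∈ satT hP hD hF A (n + 1)

lemma chk_congr {T T' : List Fml} (hiff : ∀ x, x ∈ T ↔ x ∈ T') :
    chk hP hD hF A T X = chk hP hD hF A T' X := by
  cases h : chk hP hD hF A T' X with
  | true => exact chk_mono (fun x hx => (hiff x).2 hx) h
  | false =>
      cases h2 : chk hP hD hF A T X with
      | false => rfl
      | true => exact absurd (chk_mono (fun x hx => (hiff x).1 hx) h2) (by simp [h])

lemma seteq_succ {n : ℕ} (h : seteq hP hD hF A n) : seteq hP hD hF A (n + 1) := by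
  intro X
  show X ∈ stepT hP hD hF A (satT hP hD hF A n) ↔ X ∈ stepT hP hD hF A (satT hP hD hF A (n + 1))
  rw [stepT, stepT]
  constructor
  · intro hx
    refine List.mem_filter.2 ⟨List.mem_of_mem_filter hx, ?_⟩
    rw [← chk_congr h]
    exact List.of_mem_filter hx
  · intro hx
    refine List.mem_filter.2 ⟨List.mem_of_mem_filter hx, ?_⟩
    rw [chk_congr h]
    exact List.of_mem_filter hx

lemma seteq_ge {n m : ℕ} (h : seteq hP hD hF A n) (hm : n ≤ m) : seteq hP hD hF A m := by
  induction m with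
  | zero => cases Nat.le_zero.1 hm; exact h
  | succ m ih =>
      rcases Nat.lt_or_ge n (m + 1) with h1 | h1
      · exact seteq_succ (ih (Nat.lt_succ_iff.1 h1))
      · cases Nat.le_antisymm hm h1; exact h

lemma card_grow (A : Fml) :
    ∀ n : ℕ, (∀ k < n, ¬ seteq hP hD hF A k) → n ≤ (satT hP hD hF A n).toFinset.card := by
  intro n
  induction n with
  | zero => intro _; simp
  | succ n ih =>
      intro hall
      have h1 : n ≤ (satT hP hD hF A n).toFinset.card :=
        ih (fun k hk => hall k (Nat.lt_succ_of_lt hk))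
      have hne : ¬ seteq hP hD hF A n := hall n (Nat.lt_succ_self n)
      have hsub : (satT hP hD hF A n).toFinset ⊆ (satT hP hD hF A (n + 1)).toFinset := by
        intro x hx
        rw [List.mem_toFinset] at hx ⊢
        exact satT_mono n x hx
      have hssub : (satT hP hD hF A n).toFinset ⊂ (satT hP hD hF A (n + 1)).toFinset := by
        refine ⟨hsub, ?_⟩
        intro hsub2
        apply hne
        intro X
        constructor
        · exact satT_mono n X
        · intro hx
          have := hsub2 (List.mem_toFinset.2 hx)
          exact List.mem_toFinset.1 this
      calc n + 1 ≤ (satT hP hD hF A n).toFinset.card + 1 := Nat.succ_le_succ h1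
        _ ≤ (satT hP hD hF A (n + 1)).toFinset.card := Finset.card_lt_card hssub

lemma Tstar_fix (hP hD hF : Bool) (A : Fml) :
    ∀ X, X ∈ TstarL hP hD hF A ↔ X ∈ stepT hP hD hF A (TstarL hP hD hF A) := by
  set N := (GLf A).length with hN
  have hex : ∃ k ≤ N, seteq hP hD hF A k := by
    by_contra hcon
    push_neg at hcon
    have h1 := card_grow (hP := hP) (hD := hD) (hF := hF) A (N + 1)
      (fun k hk => hcon k (Nat.lt_succ_iff.1 hk))
    have h2 : (satT hP hD hF A (N + 1)).toFinset ⊆ (GLf A).toFinset := by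
      intro x hx
      rw [List.mem_toFinset] at hx ⊢
      exact satT_sub_GLf hx
    have h3 := Finset.card_le_card h2
    have h4 := (GLf A).toFinset_card_le
    omega
  obtain ⟨k, hk, hseq⟩ := hex
  have : seteq hP hD hF A (N + 1) := seteq_ge hseq (Nat.le_succ_of_le hk)
  exact this

/-! ### Soundness of the algorithm -/

lemma hyp_prv {T : List Fml} (hTs : ∀ x ∈ T, Prv hP hD hF x) :
    ∀ h ∈ hypL hP hD hF A T, Prv hP hD hF h := by
  intro h hh
  rcases mem_hypL_iff.1 hh with rfl | ⟨hp, rfl⟩ | ⟨u, hu, w, hw, ⟨hr, rfl⟩ | ⟨hd, ho, rfl⟩⟩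
  · exact prv_box_top
  · exact MNProv.ax (Or.inl ⟨hp, rfl⟩)
  · apply prv_reach_boxbox
    simp only [reach, Bool.or_eq_true, Bool.and_eq_true, decide_eq_true_eq] at hr
    rcases hr with h1 | ⟨h1, h2⟩
    · exact Or.inl (hTs _ h1)
    · exact Or.inr ⟨h1, hTs _ h2⟩
  · apply prv_orth_boxbox hd
    simp only [orth, Bool.or_eq_true, Bool.and_eq_true, decide_eq_true_eq] at ho
    rcases ho with h1 | ⟨h1, (h2 | h2) | h2⟩
    · exact Or.inl (hTs _ h1)
    · exact Or.inr ⟨h1, Or.inl (hTs _ h2)⟩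
    · exact Or.inr ⟨h1, Or.inr (Or.inl (hTs _ h2))⟩
    · exact Or.inr ⟨h1, Or.inr (Or.inr (hTs _ h2))⟩

lemma satT_sound : ∀ n : ℕ, ∀ X ∈ satT hP hD hF A n, Prv hP hD hF X := by
  intro n
  induction n with
  | zero => intro X h; exact absurd h (by simp [satT])
  | succ n ih =>
      intro X h
      have h1 : X ∈ GLf A := List.mem_of_mem_filter h
      have h2 : chk hP hD hF A (satT hP hD hF A n) X = true := List.of_mem_filter h
      have hTC := (chk_iff_TC (OK_GLf h1)).1 h2
      exact prv_of_TC _ (hyp_prv ih) X hTC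

lemma Tstar_sound : ∀ X ∈ TstarL hP hD hF A, Prv hP hD hF X :=
  satT_sound _

lemma mainB_sound (h : mainB hP hD hF A = true) : Prv hP hD hF A := by
  have hTC := (chk_iff_TC (OK_A)).1 h
  exact prv_of_TC _ (hyp_prv (Tstar_sound)) A hTC

end Stab
/-! ### Soundness of the logic with respect to classes of MN-frames -/

section FrameSound

variable {hP hD hF : Bool}

lemma prv_frame_sound {W : Type*} (F : MNFrame W) (Sat : W → Fml → Prop) (hS : IsSat F Sat)
    (hp : hP = true → F.IsMNP) (hd : hD = true → F.IsMND) (hf : hF = true → F.IsTransitive) :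
    ∀ A, Prv hP hD hF A → ∀ x, Sat x A := by
  intro A hA
  induction hA with
  | @taut B h =>
      intro x
      classical
      have hb : decide (Sat x Fml.bot) = false := by simp [hS.bot x]
      have himp : ∀ B C : Fml,
          decide (Sat x (B.imp C)) = (!(decide (Sat x B)) || decide (Sat x C)) := by
        intro B C
        have hiff := hS.imp x B C
        by_cases hB : Sat x B <;> by_cases hC : Sat x C
        · simp [hiff.2 (fun _ => hC), hB, hC]
        · have hni : ¬ Sat x (B.imp C) := fun hh => hC (hiff.1 hh hB)
          simp [hni, hB, hC]
        · simp [hiff.2 (fun _ => hC), hB, hC]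
        · have hs : Sat x (B.imp C) := hiff.2 (fun hh => absurd hh hB)
          simp [hs, hB, hC]
      have := h (fun B => decide (Sat x B)) hb himp
      simpa using this
  | @ax B h =>
      rcases h with ⟨hpf, rfl⟩ | ⟨hdf, ⟨B, rfl⟩⟩ | ⟨hff, ⟨B, rfl⟩⟩
      · -- axiom P
        intro x
        rw [Fml.neg, hS.imp]
        intro hbox
        obtain ⟨V, hV⟩ := hp hpf x
        obtain ⟨y, _, hy⟩ := (hS.box x Fml.bot).1 hbox V hV
        exact absurd hy (hS.bot y)
      · -- axiom D
        intro x
        rw [Fml.neg, hS.imp]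
        intro hand
        exfalso
        rw [Fml.and, Fml.neg, hS.imp] at hand
        have h2 : ¬ Sat x ((B.box).imp ((B.neg.box).neg)) := fun h => (hS.bot x) (hand h)
        rw [hS.imp x (B.box) ((B.neg.box).neg)] at h2
        obtain ⟨hB, hnB⟩ := _root_.not_imp.1 h2
        rw [Fml.neg, hS.imp] at hnB
        obtain ⟨hnB', _⟩ := _root_.not_imp.1 hnB
        rcases hd hdf x {y | Sat y B} with hrel | hrel
        · obtain ⟨y, hyV, hy⟩ := (hS.box x (B.neg)).1 hnB' _ hrel
          rw [Fml.neg, hS.imp] at hy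
          exact (hS.bot y) (hy hyV)
        · obtain ⟨y, hyV, hy⟩ := (hS.box x B).1 hB _ hrel
          exact hyV hy
      · -- axiom F
        intro x
        rw [hS.imp]
        intro hbox
        rw [hS.box]
        intro V hV
        by_contra hcon
        push_neg at hcon
        have hall : ∀ y, y ∈ V → ∃ U : Set W, F.rel y U ∧ ∀ z ∈ U, ¬ Sat z B := by
          intro y hy
          have := hcon y hy
          rw [hS.box] at this
          push_neg at this
          obtain ⟨U, hU1, hU2⟩ := this
          exact ⟨U, hU1, hU2⟩
        choose! U hU1 hU2 using hall
        have htr := hf hff x V U hV hU1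
        obtain ⟨z, hz, hsz⟩ := (hS.box x B).1 hbox _ htr
        rw [Set.mem_iUnion₂] at hz
        obtain ⟨y, hy, hzy⟩ := hz
        exact hU2 y hy z hzy hsz
  | mp _ _ ih1 ih2 =>
      intro x
      exact (hS.imp x _ _).1 (ih1 x) (ih2 x)
  | nec _ ih =>
      intro x
      rw [hS.box]
      intro V hV
      obtain ⟨y, hy⟩ := F.rel_nonempty x V hV
      exact ⟨y, hy, ih y⟩
  | rm _ ih =>
      intro x
      rw [hS.imp]
      intro hbox
      rw [hS.box]
      intro V hV
      obtain ⟨y, hyV, hyA⟩ := (hS.box x _).1 hbox V hV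
      exact ⟨y, hyV, (hS.imp y _ _).1 (ih y) hyA⟩

end FrameSound

/-! ### The canonical countermodel -/

section Canon

variable (hP hD hF : Bool) (A : Fml)

/-- worlds: valuations satisfying all constraint hypotheses of the saturated set -/
def Wld : Type :=
  {v : Fml → Bool // compatV v ∧ ∀ h ∈ hypL hP hD hF A (TstarL hP hD hF A), v h = true}

variable {hP hD hF A}

lemma wld_imp (v : Wld hP hD hF A) (X Y : Fml) : v.1 (X.imp Y) = (!(v.1 X) || v.1 Y) :=
  v.2.1.2 X Y

lemma wld_bot (v : Wld hP hD hF A) : v.1 Fml.bot = false := v.2.1.1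

lemma wld_neg (v : Wld hP hD hF A) (X : Fml) : v.1 X.neg = !(v.1 X) := by
  rw [Fml.neg, wld_imp, wld_bot]; simp

lemma wld_box_top (v : Wld hP hD hF A) : v.1 (Fml.top.box) = true :=
  v.2.2 _ (mem_hypL_iff.2 (Or.inl rfl))

lemma wld_P (hp : hP = true) (v : Wld hP hD hF A) : v.1 (Fml.bot.box) = false := by
  have := v.2.2 _ (mem_hypL_iff.2 (Or.inr (Or.inl ⟨hp, rfl⟩)))
  rw [wld_neg] at this
  simpa using this

lemma wld_reach {u w : Fml} (hu : u ∈ SLf A) (hw : w ∈ SLf A)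
    (hr : reach hF (TstarL hP hD hF A) u w = true) (v : Wld hP hD hF A)
    (hbu : v.1 u.box = true) : v.1 w.box = true := by
  have hm := v.2.2 _ (mem_hypL_iff.2 (Or.inr (Or.inr ⟨u, hu, w, hw, Or.inl ⟨hr, rfl⟩⟩)))
  rw [wld_imp, hbu] at hm
  simpa using hm

lemma wld_orth (hd : hD = true) {u w : Fml} (hu : u ∈ SLf A) (hw : w ∈ SLf A)
    (ho : orth hF (TstarL hP hD hF A) u w = true) (v : Wld hP hD hF A)
    (hbu : v.1 u.box = true) : v.1 w.box = false := by
  have hm := v.2.2 _ (mem_hypL_iff.2 (Or.inr (Or.inr ⟨u, hu, w, hw, Or.inr ⟨hd, ho, rfl⟩⟩)))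
  rw [wld_imp, hbu, wld_neg] at hm
  simpa using hm

/-- a goal formula true at all worlds belongs to the saturated set -/
lemma allw_mem_Tstar {X : Fml} (hG : X ∈ GLf A)
    (hall : ∀ v : Wld hP hD hF A, v.1 X = true) : X ∈ TstarL hP hD hF A := by
  have hTC : TC (hypL hP hD hF A (TstarL hP hD hF A)) X := fun val hc hh => hall ⟨val, hc, hh⟩
  have hchk := (chk_iff_TC (OK_GLf hG)).2 hTC
  exact (Tstar_fix hP hD hF A X).2 (List.mem_filter.2 ⟨hG, hchk⟩)

lemma form_mem_GLf {u w X : Fml} (hu : u ∈ SLf A) (hw : w ∈ SLf A)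
    (hX : X ∈ [u.imp w, u.box.imp w, u.imp w.neg, u.box.imp w.neg, u.box.imp w.box.neg]) :
    X ∈ GLf A :=
  List.mem_flatMap.2 ⟨u, hu, List.mem_flatMap.2 ⟨w, hw, hX⟩⟩

/-! the six "existence of a world" lemmas -/

lemma cons1 {u w : Fml} (hu : u ∈ SLf A) (hw : w ∈ SLf A) (v : Wld hP hD hF A)
    (hbu : v.1 u.box = true) (hbw : v.1 w.box = false) :
    ∃ z : Wld hP hD hF A, z.1 u = true ∧ z.1 w = false := by
  by_contra hcon
  push_neg at hcon
  have hall : ∀ z : Wld hP hD hF A, z.1 (u.imp w) = true := by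
    intro z
    rw [wld_imp]
    cases hz : z.1 u
    · simp
    · cases hzw : z.1 w
      · exact absurd hzw (hcon z hz)
      · simp
  have hmem := allw_mem_Tstar (form_mem_GLf hu hw (by simp)) hall
  have hr : reach hF (TstarL hP hD hF A) u w = true := by simp [reach, hmem]
  exact absurd (wld_reach hu hw hr v hbu) (by simp [hbw])

lemma cons2 (hf : hF = true) {u w : Fml} (hu : u ∈ SLf A) (hw : w ∈ SLf A)
    (v : Wld hP hD hF A) (hbu : v.1 u.box = true) (hbw : v.1 w.box = false) :
    ∃ z : Wld hP hD hF A, z.1 u.box = true ∧ z.1 w = false := by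
  by_contra hcon
  push_neg at hcon
  have hall : ∀ z : Wld hP hD hF A, z.1 (u.box.imp w) = true := by
    intro z
    rw [wld_imp]
    cases hz : z.1 u.box
    · simp
    · cases hzw : z.1 w
      · exact absurd hzw (hcon z hz)
      · simp
  have hmem := allw_mem_Tstar (form_mem_GLf hu hw (by simp)) hall
  have hr : reach hF (TstarL hP hD hF A) u w = true := by
    rw [hf] at hmem ⊢
    simp [reach, hmem]
  exact absurd (wld_reach hu hw hr v hbu) (by simp [hbw])

lemma consD1 (hd : hD = true) {u w : Fml} (hu : u ∈ SLf A) (hw : w ∈ SLf A)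
    (v : Wld hP hD hF A) (hbu : v.1 u.box = true) (hbw : v.1 w.box = true) :
    ∃ z : Wld hP hD hF A, z.1 u = true ∧ z.1 w = true := by
  by_contra hcon
  push_neg at hcon
  have hall : ∀ z : Wld hP hD hF A, z.1 (u.imp w.neg) = true := by
    intro z
    rw [wld_imp, wld_neg]
    cases hz : z.1 u
    · simp
    · simp [hcon z hz]
  have hmem := allw_mem_Tstar (form_mem_GLf hu hw (by simp)) hall
  have ho : orth hF (TstarL hP hD hF A) u w = true := by simp [orth, hmem]
  exact absurd (wld_orth hd hu hw ho v hbu) (by simp [hbw])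

lemma consD2 (hd : hD = true) (hf : hF = true) {u w : Fml} (hu : u ∈ SLf A) (hw : w ∈ SLf A)
    (v : Wld hP hD hF A) (hbu : v.1 u.box = true) (hbw : v.1 w.box = true) :
    ∃ z : Wld hP hD hF A, z.1 u.box = true ∧ z.1 w = true := by
  by_contra hcon
  push_neg at hcon
  have hall : ∀ z : Wld hP hD hF A, z.1 (u.box.imp w.neg) = true := by
    intro z
    rw [wld_imp, wld_neg]
    cases hz : z.1 u.box
    · simp
    · simp [hcon z hz]
  have hmem := allw_mem_Tstar (form_mem_GLf hu hw (by simp)) hall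
  have ho : orth hF (TstarL hP hD hF A) u w = true := by
    rw [hf] at hmem ⊢
    simp [orth, hmem]
  exact absurd (wld_orth hd hu hw ho v hbu) (by simp [hbw])

lemma consD2' (hd : hD = true) (hf : hF = true) {u w : Fml} (hu : u ∈ SLf A) (hw : w ∈ SLf A)
    (v : Wld hP hD hF A) (hbu : v.1 u.box = true) (hbw : v.1 w.box = true) :
    ∃ z : Wld hP hD hF A, z.1 u = true ∧ z.1 w.box = true := by
  by_contra hcon
  push_neg at hcon
  have hall : ∀ z : Wld hP hD hF A, z.1 (w.box.imp u.neg) = true := by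
    intro z
    rw [wld_imp, wld_neg]
    cases hz : z.1 w.box
    · simp
    · cases hzu : z.1 u
      · simp
      · exact absurd hz (by simp [hcon z hzu])
  have hmem := allw_mem_Tstar (form_mem_GLf hw hu (by simp)) hall
  have ho : orth hF (TstarL hP hD hF A) u w = true := by
    rw [hf] at hmem ⊢
    simp [orth, hmem]
  exact absurd (wld_orth hd hu hw ho v hbu) (by simp [hbw])

lemma consD3 (hd : hD = true) (hf : hF = true) {u w : Fml} (hu : u ∈ SLf A) (hw : w ∈ SLf A)
    (v : Wld hP hD hF A) (hbu : v.1 u.box = true) (hbw : v.1 w.box = true) :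
    ∃ z : Wld hP hD hF A, z.1 u.box = true ∧ z.1 w.box = true := by
  by_contra hcon
  push_neg at hcon
  have hall : ∀ z : Wld hP hD hF A, z.1 (u.box.imp w.box.neg) = true := by
    intro z
    rw [wld_imp, wld_neg]
    cases hz : z.1 u.box
    · simp
    · simp [hcon z hz]
  have hmem := allw_mem_Tstar (form_mem_GLf hu hw (by simp)) hall
  have ho : orth hF (TstarL hP hD hF A) u w = true := by
    rw [hf] at hmem ⊢
    simp [orth, hmem]
  exact absurd (wld_orth hd hu hw ho v hbu) (by simp [hbw])

/-- the admission condition for neighborhoods in the D-logics -/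
def Good (v : Wld hP hD hF A) (V : Set (Wld hP hD hF A)) : Prop :=
  ∀ R ∈ SLf A, v.1 R.box = true →
    (∃ y ∈ V, y.1 R = true) ∧ (hF = true → ∃ y ∈ V, y.1 R.box = true)

variable (hP hD hF A) in
/-- the canonical neighborhood relation -/
inductive Rel : Wld hP hD hF A → Set (Wld hP hD hF A) → Prop
  | base (v : Wld hP hD hF A) (Q : Fml) : Q ∈ SLf A → v.1 Q.box = false →
      Rel v {y | y.1 Q = false}
  | mono (v : Wld hP hD hF A) (V U : Set (Wld hP hD hF A)) : Rel v V → V ⊆ U → Rel v U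
  | trans (v : Wld hP hD hF A) (V : Set (Wld hP hD hF A)) (U : Wld hP hD hF A → Set (Wld hP hD hF A)) :
      hF = true → Rel v V → (∀ y ∈ V, Rel y (U y)) → Rel v (⋃ y ∈ V, U y)
  | dbase (v : Wld hP hD hF A) (V : Set (Wld hP hD hF A)) : hD = true → Good v V → Rel v V

lemma good_of_rel {v : Wld hP hD hF A} {V : Set (Wld hP hD hF A)}
    (h : Rel hP hD hF A v V) : Good v V := by
  induction h with
  | base v Q hQ hbQ =>
      intro R hR hbR
      constructor
      · obtain ⟨z, hz1, hz2⟩ := cons1 hR hQ v hbR hbQ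
        exact ⟨z, hz2, hz1⟩
      · intro hf
        obtain ⟨z, hz1, hz2⟩ := cons2 hf hR hQ v hbR hbQ
        exact ⟨z, hz2, hz1⟩
  | mono v V U _ hsub ih =>
      intro R hR hbR
      obtain ⟨⟨y, hy1, hy2⟩, h2⟩ := ih R hR hbR
      refine ⟨⟨y, hsub hy1, hy2⟩, fun hf => ?_⟩
      obtain ⟨y', hy1', hy2'⟩ := h2 hf
      exact ⟨y', hsub hy1', hy2'⟩
  | trans v V U hf _ _ ih ihs =>
      intro R hR hbR
      obtain ⟨_, h2⟩ := ih R hR hbR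
      obtain ⟨y, hyV, hyb⟩ := h2 hf
      obtain ⟨⟨z, hz1, hz2⟩, h3⟩ := ihs y hyV R hR hyb
      have hzU : z ∈ ⋃ y ∈ V, U y := Set.mem_biUnion hyV hz1
      refine ⟨⟨z, hzU, hz2⟩, fun hf' => ?_⟩
      obtain ⟨z', hz1', hz2'⟩ := h3 hf'
      exact ⟨z', Set.mem_biUnion hyV hz1', hz2'⟩
  | dbase v V hd hgood => exact hgood

lemma rel_nonempty' {v : Wld hP hD hF A} {V : Set (Wld hP hD hF A)}
    (h : Rel hP hD hF A v V) : V.Nonempty := by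
  obtain ⟨⟨y, hy, _⟩, _⟩ := good_of_rel h Fml.top mem_SLf_top (wld_box_top v)
  exact ⟨y, hy⟩

/-- the canonical frame (given that some world exists) -/
def CFrame (hne : Nonempty (Wld hP hD hF A)) : MNFrame (Wld hP hD hF A) where
  nonempty := hne
  rel := Rel hP hD hF A
  rel_nonempty := fun _ _ h => rel_nonempty' h
  mono := Rel.mono

/-- the canonical satisfaction relation -/
def CSat : Fml → Wld hP hD hF A → Prop
  | .var n, v => v.1 (.var n) = true
  | .bot, _ => False
  | .imp B C, v => CSat B v → CSat C v
  | .box B, v => ∀ V : Set (Wld hP hD hF A), Rel hP hD hF A v V → ∃ y ∈ V, CSat B y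

lemma CSat_isSat (hne : Nonempty (Wld hP hD hF A)) :
    IsSat (CFrame hne) (fun v B => CSat B v) where
  bot := fun _ h => h
  imp := fun _ _ _ => Iff.rfl
  box := fun _ _ => Iff.rfl

lemma CSat_coincide : ∀ B : Fml, (∀ c, Fml.box c ∈ sub B → c ∈ SLf A) →
    ∀ v : Wld hP hD hF A, (CSat B v ↔ v.1 B = true) := by
  intro B
  induction B with
  | var n => intro _ v; exact Iff.rfl
  | bot => intro _ v; simp [CSat, wld_bot]
  | imp B C ihB ihC =>
      intro hsub v
      have hB := ihB (fun c hc => hsub c (List.mem_cons_of_mem _ (List.mem_append_left _ hc))) v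
      have hC := ihC (fun c hc => hsub c (List.mem_cons_of_mem _ (List.mem_append_right _ hc))) v
      show (CSat B v → CSat C v) ↔ _
      rw [hB, hC, wld_imp]
      cases hb : v.1 B <;> cases hc : v.1 C <;> simp
  | box B ih =>
      intro hsub v
      have hBS : B ∈ SLf A := hsub B (self_mem_sub _)
      have ihB := ih (fun c hc => hsub c (List.mem_cons_of_mem _ hc))
      constructor
      · intro hcs
        by_contra hcon
        have hbB : v.1 B.box = false := by
          cases h : v.1 B.box
          · rfl
          · exact absurd h hcon
        obtain ⟨y, hyV, hy⟩ := hcs {y | y.1 B = false} (Rel.base v B hBS hbB)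
        have := (ihB y).1 hy
        rw [Set.mem_setOf_eq] at hyV
        simp [hyV] at this
      · intro hbB V hrel
        obtain ⟨⟨y, hyV, hy⟩, _⟩ := good_of_rel hrel B hBS hbB
        exact ⟨y, hyV, (ihB y).2 hy⟩

lemma CFrame_MNP (hne : Nonempty (Wld hP hD hF A)) (hp : hP = true) :
    (CFrame hne).IsMNP := by
  intro v
  exact ⟨{y | y.1 Fml.bot = false}, Rel.base v Fml.bot mem_SLf_bot (wld_P hp v)⟩

lemma CFrame_trans (hne : Nonempty (Wld hP hD hF A)) (hf : hF = true) :
    (CFrame hne).IsTransitive := by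
  intro x V U h1 h2
  exact Rel.trans x V U hf h1 h2

lemma CFrame_MND (hne : Nonempty (Wld hP hD hF A)) (hd : hD = true) :
    (CFrame hne).IsMND := by
  intro v V
  by_cases hgood : Good v V
  · exact Or.inl (Rel.dbase v V hd hgood)
  · right
    apply Rel.dbase v Vᶜ hd
    have hex : ∃ R₀, R₀ ∈ SLf A ∧ v.1 R₀.box = true ∧
        ((∀ y ∈ V, y.1 R₀ ≠ true) ∨ (hF = true ∧ ∀ y ∈ V, y.1 R₀.box ≠ true)) := by
      by_contra hcon
      push_neg at hcon
      apply hgood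
      intro R hR hbR
      exact hcon R hR hbR
    obtain ⟨R₀, hR₀, hbR₀, hcase⟩ := hex
    intro R hR hbR
    rcases hcase with hno | ⟨hf, hno⟩
    · constructor
      · obtain ⟨z, hz1, hz2⟩ := consD1 hd hR hR₀ v hbR hbR₀
        exact ⟨z, fun hzV => hno z hzV hz2, hz1⟩
      · intro hf
        obtain ⟨z, hz1, hz2⟩ := consD2 hd hf hR hR₀ v hbR hbR₀
        exact ⟨z, fun hzV => hno z hzV hz2, hz1⟩
    · constructor
      · obtain ⟨z, hz1, hz2⟩ := consD2' hd hf hR hR₀ v hbR hbR₀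
        exact ⟨z, fun hzV => hno z hzV hz2, hz1⟩
      · intro hf'
        obtain ⟨z, hz1, hz2⟩ := consD3 hd hf hR hR₀ v hbR hbR₀
        exact ⟨z, fun hzV => hno z hzV hz2, hz1⟩

/-! ### Completeness of the algorithm -/

lemma mainB_complete (h : Prv hP hD hF A) : mainB hP hD hF A = true := by
  by_contra hmb
  have hnTC : ¬ TC (hypL hP hD hF A (TstarL hP hD hF A)) A := by
    intro hTC
    exact hmb ((chk_iff_TC OK_A).2 hTC)
  rw [TC] at hnTC
  push_neg at hnTC
  obtain ⟨val₀, hc, hh, hA⟩ := hnTC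
  have hAf : val₀ A = false := by
    cases h : val₀ A
    · rfl
    · exact absurd h hA
  set w₀ : Wld hP hD hF A := ⟨val₀, hc, hh⟩ with hw₀
  have hne : Nonempty (Wld hP hD hF A) := ⟨w₀⟩
  have hsat := prv_frame_sound (CFrame hne) (fun v B => CSat B v) (CSat_isSat hne)
    (CFrame_MNP hne) (CFrame_MND hne) (CFrame_trans hne) A h w₀
  have hco := (CSat_coincide A (fun c hc => OK_A.2 c hc) w₀).1 hsat
  have hval : val₀ A = true := hco
  rw [hAf] at hval
  exact Bool.false_ne_true hval

/-- the main equivalence -/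
theorem prv_iff_mainB : Prv hP hD hF A ↔ mainB hP hD hF A = true :=
  ⟨mainB_complete, mainB_sound⟩

end Canon
/-! ### The algorithm at the level of codes -/

section Codes

def impC (a b : ℕ) : ℕ := 4 * Nat.pair a b + 2
def boxC (a : ℕ) : ℕ := 4 * a + 3
def negC (a : ℕ) : ℕ := impC a 1
def topC : ℕ := impC 1 1

lemma enc_imp (X Y : Fml) : encodeFml (X.imp Y) = impC (encodeFml X) (encodeFml Y) := rfl
lemma enc_box (X : Fml) : encodeFml X.box = boxC (encodeFml X) := rfl
lemma enc_neg (X : Fml) : encodeFml X.neg = negC (encodeFml X) := rfl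
lemma enc_top : encodeFml Fml.top = topC := rfl
lemma enc_bot : encodeFml Fml.bot = 1 := rfl

lemma encodeFml_inj : ∀ X Y : Fml, encodeFml X = encodeFml Y → X = Y := by
  intro X
  induction X with
  | var n =>
      intro Y h
      cases Y with
      | var m =>
          simp only [encodeFml] at h
          have : n = m := by omega
          rw [this]
      | bot => simp only [encodeFml] at h; omega
      | imp Y1 Y2 => simp only [encodeFml] at h; omega
      | box Y1 => simp only [encodeFml] at h; omega
  | bot =>
      intro Y h
      cases Y with
      | var m => simp only [encodeFml] at h; omega
      | bot => rfl
      | imp Y1 Y2 => simp only [encodeFml] at h; omega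
      | box Y1 => simp only [encodeFml] at h; omega
  | imp X1 X2 ih1 ih2 =>
      intro Y h
      cases Y with
      | var m => simp only [encodeFml] at h; omega
      | bot => simp only [encodeFml] at h; omega
      | imp Y1 Y2 =>
          simp only [encodeFml] at h
          have hp : Nat.pair (encodeFml X1) (encodeFml X2)
              = Nat.pair (encodeFml Y1) (encodeFml Y2) := by omega
          obtain ⟨h1, h2⟩ := Nat.pair_eq_pair.1 hp
          rw [ih1 Y1 h1, ih2 Y2 h2]
      | box Y1 => simp only [encodeFml] at h; omega
  | box X1 ih =>
      intro Y h
      cases Y with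
      | var m => simp only [encodeFml] at h; omega
      | bot => simp only [encodeFml] at h; omega
      | imp Y1 Y2 => simp only [encodeFml] at h; omega
      | box Y1 =>
          simp only [encodeFml] at h
          have h1 : encodeFml X1 = encodeFml Y1 := by omega
          rw [ih Y1 h1]

lemma unpair1_div4_lt {n : ℕ} (h : n % 4 = 2) : (Nat.unpair (n / 4)).1 < n := by
  have h1 := Nat.unpair_left_le (n / 4)
  have : n / 4 < n := Nat.div_lt_self (by omega) (by omega)
  omega

lemma unpair2_div4_lt {n : ℕ} (h : n % 4 = 2) : (Nat.unpair (n / 4)).2 < n := by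
  have h1 := Nat.unpair_right_le (n / 4)
  have : n / 4 < n := Nat.div_lt_self (by omega) (by omega)
  omega

lemma div4_lt {n : ℕ} (h : n % 4 = 3) : n / 4 < n := Nat.div_lt_self (by omega) (by omega)

def subC (n : ℕ) : List ℕ :=
  if h : n % 4 = 2 then
    n :: (subC (Nat.unpair (n / 4)).1 ++ subC (Nat.unpair (n / 4)).2)
  else if h3 : n % 4 = 3 then n :: subC (n / 4)
  else [n]
termination_by n
decreasing_by
  · exact unpair1_div4_lt h
  · exact unpair2_div4_lt h
  · exact div4_lt h3

def varsC (n : ℕ) : List ℕ :=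
  if h : n % 4 = 2 then varsC (Nat.unpair (n / 4)).1 ++ varsC (Nat.unpair (n / 4)).2
  else if h3 : n % 4 = 3 then varsC (n / 4)
  else if n % 4 = 0 then [n / 4]
  else []
termination_by n
decreasing_by
  · exact unpair1_div4_lt h
  · exact unpair2_div4_lt h
  · exact div4_lt h3

def evC (lv lb : List ℕ) (n : ℕ) : Bool :=
  if h : n % 4 = 2 then
    !(evC lv lb (Nat.unpair (n / 4)).1) || evC lv lb (Nat.unpair (n / 4)).2
  else if n % 4 = 3 then decide ((n / 4) ∈ lb)
  else if n % 4 = 0 then decide ((n / 4) ∈ lv)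
  else false
termination_by n
decreasing_by
  · exact unpair1_div4_lt h
  · exact unpair2_div4_lt h

/- arithmetic facts about codes -/
lemma impC_mod (a b : ℕ) : impC a b % 4 = 2 := by unfold impC; omega
lemma impC_div (a b : ℕ) : impC a b / 4 = Nat.pair a b := by unfold impC; omega
lemma boxC_mod (a : ℕ) : boxC a % 4 = 3 := by unfold boxC; omega
lemma boxC_div (a : ℕ) : boxC a / 4 = a := by unfold boxC; omega
lemma varC_mod (n : ℕ) : (4 * n) % 4 = 0 := by omega
lemma varC_div (n : ℕ) : (4 * n) / 4 = n := by omega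

lemma subC_imp (a b : ℕ) : subC (impC a b) = impC a b :: (subC a ++ subC b) := by
  rw [subC]
  simp [impC_mod, impC_div, Nat.unpair_pair]
lemma subC_box (a : ℕ) : subC (boxC a) = boxC a :: subC a := by
  rw [subC]
  simp [boxC_mod, boxC_div]
lemma subC_var (n : ℕ) : subC (4 * n) = [4 * n] := by
  rw [subC]; simp [varC_mod]
lemma subC_bot : subC 1 = [1] := by rw [subC]; simp

lemma subC_enc : ∀ X : Fml, subC (encodeFml X) = (sub X).map encodeFml := by
  intro X
  induction X with
  | var n => simp [encodeFml, subC_var, sub]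
  | bot => simp [encodeFml, subC_bot, sub]
  | imp X Y ihX ihY => simp [enc_imp, subC_imp, sub, ihX, ihY, enc_imp]
  | box X ih => simp [enc_box, subC_box, sub, ih, enc_box]

lemma varsC_imp (a b : ℕ) : varsC (impC a b) = varsC a ++ varsC b := by
  rw [varsC]; simp [impC_mod, impC_div, Nat.unpair_pair]
lemma varsC_box (a : ℕ) : varsC (boxC a) = varsC a := by
  rw [varsC]; simp [boxC_mod, boxC_div]
lemma varsC_var (n : ℕ) : varsC (4 * n) = [n] := by
  rw [varsC]; simp [varC_mod, varC_div]
lemma varsC_bot : varsC 1 = [] := by rw [varsC]; simp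

lemma varsC_enc : ∀ X : Fml, varsC (encodeFml X) = varsF X := by
  intro X
  induction X with
  | var n => simp [encodeFml, varsC_var, varsF]
  | bot => simp [encodeFml, varsC_bot, varsF]
  | imp X Y ihX ihY => simp [enc_imp, varsC_imp, varsF, ihX, ihY]
  | box X ih => simp [enc_box, varsC_box, varsF, ih]

lemma evC_imp (lv lb : List ℕ) (a b : ℕ) :
    evC lv lb (impC a b) = (!(evC lv lb a) || evC lv lb b) := by
  rw [evC.eq_def]; simp [impC_mod, impC_div, Nat.unpair_pair]
lemma evC_box (lv lb : List ℕ) (a : ℕ) : evC lv lb (boxC a) = decide (a ∈ lb) := by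
  rw [evC.eq_def]; simp [boxC_mod, boxC_div]
lemma evC_var (lv lb : List ℕ) (n : ℕ) : evC lv lb (4 * n) = decide (n ∈ lv) := by
  rw [evC.eq_def]; simp [varC_mod, varC_div]
lemma evC_bot (lv lb : List ℕ) : evC lv lb 1 = false := by rw [evC.eq_def]; simp

lemma mem_map_enc (X : Fml) (T : List Fml) :
    decide (encodeFml X ∈ T.map encodeFml) = decide (X ∈ T) := by
  congr 1
  simp only [eq_iff_iff]
  constructor
  · intro h
    obtain ⟨Y, hY, hYX⟩ := List.mem_map.1 h
    rw [encodeFml_inj Y X hYX] at hY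
    exact hY
  · intro h
    exact List.mem_map.2 ⟨X, h, rfl⟩

lemma evC_enc (lv : List ℕ) (lb : List Fml) :
    ∀ X : Fml, evC lv (lb.map encodeFml) (encodeFml X) = ev lv lb X := by
  intro X
  induction X with
  | var n => simp [encodeFml, evC_var, ev]
  | bot => simp [encodeFml, evC_bot, ev]
  | imp X Y ihX ihY => simp [enc_imp, evC_imp, ev, ihX, ihY]
  | box X ih =>
      rw [enc_box, evC_box, ev, mem_map_enc]

def SLC (n : ℕ) : List ℕ :=
  1 :: topC :: (subC n).filterMap (fun m => if m % 4 = 3 then some (m / 4) else none)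

lemma code_body (B : Fml) :
    (if encodeFml B % 4 = 3 then some (encodeFml B / 4) else none)
      = Option.map encodeFml (match B with | Fml.box c => some c | _ => none) := by
  cases B with
  | var n => rw [if_neg (by simp only [encodeFml]; omega)]; rfl
  | bot => rw [if_neg (by simp only [encodeFml]; omega)]; rfl
  | imp a b => rw [if_neg (by rw [enc_imp]; simp [impC_mod])]; rfl
  | box c => rw [if_pos (by rw [enc_box]; exact boxC_mod _), enc_box, boxC_div]; rfl

lemma SLC_enc (A : Fml) : SLC (encodeFml A) = (SLf A).map encodeFml := by
  rw [SLC, SLf, subC_enc]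
  simp only [List.map_cons, enc_top, enc_bot]
  congr 2
  rw [List.filterMap_map, List.map_filterMap]
  apply List.filterMap_congr
  intro B _
  rw [Function.comp_apply, code_body]

def vsC (n : ℕ) : List ℕ := varsC n ++ (SLC n).flatMap varsC

lemma vsC_enc (A : Fml) : vsC (encodeFml A) = vsL A := by
  rw [vsC, vsL, varsC_enc, SLC_enc, List.flatMap_map]
  simp only [Function.comp_def, varsC_enc]

def GLC (n : ℕ) : List ℕ := (SLC n).flatMap fun u => (SLC n).flatMap fun w =>
  [impC u w, impC (boxC u) w, impC u (negC w), impC (boxC u) (negC w),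
    impC (boxC u) (negC (boxC w))]

lemma GLC_enc (A : Fml) : GLC (encodeFml A) = (GLf A).map encodeFml := by
  rw [GLC, GLf]
  simp only [SLC_enc, List.flatMap_map, List.map_flatMap, Function.comp_def,
    ← enc_box, ← enc_neg, ← enc_imp, List.map_cons, List.map_nil]

def reachC (hf : Bool) (T : List ℕ) (u w : ℕ) : Bool :=
  decide (impC u w ∈ T) || (hf && decide (impC (boxC u) w ∈ T))

def orthC (hf : Bool) (T : List ℕ) (u w : ℕ) : Bool :=
  decide (impC u (negC w) ∈ T) ||
    (hf && (decide (impC (boxC u) (negC w) ∈ T) || decide (impC (boxC w) (negC u) ∈ T) ||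
      decide (impC (boxC u) (negC (boxC w)) ∈ T)))

lemma reachC_enc (hf : Bool) (T : List Fml) (u w : Fml) :
    reachC hf (T.map encodeFml) (encodeFml u) (encodeFml w) = reach hf T u w := by
  simp only [reachC, reach]
  rw [← mem_map_enc (u.imp w) T, ← mem_map_enc (u.box.imp w) T]
  rfl

lemma orthC_enc (hf : Bool) (T : List Fml) (u w : Fml) :
    orthC hf (T.map encodeFml) (encodeFml u) (encodeFml w) = orth hf T u w := by
  simp only [orthC, orth]
  rw [← mem_map_enc (u.imp w.neg) T, ← mem_map_enc (u.box.imp w.neg) T,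
    ← mem_map_enc (w.box.imp u.neg) T, ← mem_map_enc (u.box.imp w.box.neg) T]
  rfl

def hypC (hp hd hf : Bool) (n : ℕ) (T : List ℕ) : List ℕ :=
  boxC topC :: ((if hp then [negC (boxC 1)] else []) ++
    ((SLC n).flatMap fun u => (SLC n).flatMap fun w =>
      (if reachC hf T u w then [impC (boxC u) (boxC w)] else []) ++
      (if hd && orthC hf T u w then [impC (boxC u) (negC (boxC w))] else [])))

lemma hypC_enc (hp hd hf : Bool) (A : Fml) (T : List Fml) :
    hypC hp hd hf (encodeFml A) (T.map encodeFml) = (hypL hp hd hf A T).map encodeFml := by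
  rw [hypC, hypL]
  simp only [SLC_enc, List.flatMap_map, List.map_cons, List.map_append, List.map_flatMap,
    Function.comp_def, reachC_enc, orthC_enc, apply_ite (List.map encodeFml),
    List.map_nil, ← enc_bot, ← enc_top, ← enc_box, ← enc_neg, ← enc_imp]

def chkC (hp hd hf : Bool) (n : ℕ) (T : List ℕ) (X : ℕ) : Bool :=
  (subsetsOf (vsC n)).all fun lv => (subsetsOf (SLC n)).all fun lb =>
    !((hypC hp hd hf n T).all fun h => evC lv lb h) || evC lv lb X

lemma subsetsOf_map {α β : Type*} (f : α → β) :
    ∀ l : List α, subsetsOf (l.map f) = (subsetsOf l).map (List.map f) := by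
  intro l
  induction l with
  | nil => simp [subsetsOf]
  | cons a l ih =>
      simp only [List.map_cons, subsetsOf, ih, List.map_append, List.map_map]
      rfl

lemma all_map' {α β : Type*} (f : α → β) (l : List α) (p : β → Bool) :
    (l.map f).all p = l.all (fun a => p (f a)) := by
  induction l with
  | nil => rfl
  | cons a l ih => simp [List.all_cons, ih]

lemma chkC_enc (hp hd hf : Bool) (A : Fml) (T : List Fml) (X : Fml) :
    chkC hp hd hf (encodeFml A) (T.map encodeFml) (encodeFml X) = chk hp hd hf A T X := by
  rw [chkC, chk, vsC_enc, SLC_enc, subsetsOf_map, hypC_enc]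
  congr 1
  funext lv
  rw [all_map']
  congr 1
  funext lb
  rw [all_map']
  simp only [evC_enc]

def stepC (hp hd hf : Bool) (n : ℕ) (T : List ℕ) : List ℕ :=
  (GLC n).filter (fun X => chkC hp hd hf n T X)

lemma stepC_enc (hp hd hf : Bool) (A : Fml) (T : List Fml) :
    stepC hp hd hf (encodeFml A) (T.map encodeFml) = (stepT hp hd hf A T).map encodeFml := by
  rw [stepC, stepT, GLC_enc, List.filter_map]
  congr 1
  apply List.filter_congr
  intro X _
  rw [Function.comp_apply]
  exact chkC_enc hp hd hf A T X

def satC (hp hd hf : Bool) (n : ℕ) (k : ℕ) : List ℕ :=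
  k.rec [] (fun _ T => stepC hp hd hf n T)

lemma satC_enc (hp hd hf : Bool) (A : Fml) :
    ∀ k, satC hp hd hf (encodeFml A) k = (satT hp hd hf A k).map encodeFml := by
  intro k
  induction k with
  | zero => simp [satC, satT]
  | succ k ih =>
      show stepC hp hd hf (encodeFml A) (satC hp hd hf (encodeFml A) k) = _
      rw [ih, stepC_enc]
      rfl

def mainC (hp hd hf : Bool) (n : ℕ) : Bool :=
  chkC hp hd hf n (satC hp hd hf n ((GLC n).length + 1)) n

lemma mainC_enc (hp hd hf : Bool) (A : Fml) :
    mainC hp hd hf (encodeFml A) = mainB hp hd hf A := by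
  rw [mainC, mainB, GLC_enc, List.length_map, satC_enc]
  exact chkC_enc hp hd hf A _ A

end Codes
/-! ### Primitive recursiveness of the algorithm -/

section Prim

lemma memB_pr : Primrec₂ (fun (a : ℕ) (l : List ℕ) => decide (a ∈ l)) := by
  have h : Primrec fun p : ℕ × List ℕ => decide (p.2.idxOf p.1 < p.2.length) :=
    (PrimrecRel.comp Primrec.nat_lt
      (Primrec.list_idxOf.comp Primrec.fst Primrec.snd)
      (Primrec.list_length.comp Primrec.snd)).decide
  exact h.of_eq fun p => by simp [List.idxOf_lt_length_iff]

lemma mod4_pr (k : ℕ) : PrimrecPred fun n : ℕ => n % 4 = k :=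
  PrimrecRel.comp Primrec.eq (Primrec.nat_mod.comp Primrec.id (Primrec.const 4))
    (Primrec.const k)

lemma div4_pr : Primrec fun n : ℕ => n / 4 :=
  Primrec.nat_div.comp Primrec.id (Primrec.const 4)

lemma up1_pr : Primrec fun n : ℕ => (Nat.unpair (n / 4)).1 :=
  Primrec.fst.comp (Primrec.unpair.comp div4_pr)

lemma up2_pr : Primrec fun n : ℕ => (Nat.unpair (n / 4)).2 :=
  Primrec.snd.comp (Primrec.unpair.comp div4_pr)

lemma impC_pr : Primrec₂ impC :=
  Primrec.nat_add.comp₂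
    (Primrec.nat_mul.comp₂ (Primrec₂.const 4) Primrec₂.natPair) (Primrec₂.const 2)

lemma boxC_pr : Primrec boxC :=
  Primrec.nat_add.comp (Primrec.nat_mul.comp (Primrec.const 4) Primrec.id) (Primrec.const 3)

lemma negC_pr : Primrec negC := impC_pr.comp Primrec.id (Primrec.const 1)

/-! subC is primitive recursive -/

def callsS (n : ℕ) : List ℕ :=
  if n % 4 = 2 then [(Nat.unpair (n / 4)).1, (Nat.unpair (n / 4)).2]
  else if n % 4 = 3 then [n / 4] else []

lemma callsS_pr : Primrec callsS :=
  Primrec.ite (mod4_pr 2)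
    (Primrec.list_cons.comp up1_pr (Primrec.list_cons.comp up2_pr (Primrec.const [])))
    (Primrec.ite (mod4_pr 3)
      (Primrec.list_cons.comp div4_pr (Primrec.const [])) (Primrec.const []))

lemma callsS_lt : ∀ n, ∀ m ∈ callsS n, m < n := by
  intro n m h
  rw [callsS] at h
  by_cases h2 : n % 4 = 2
  · rw [if_pos h2] at h
    simp only [List.mem_cons, List.mem_singleton] at h
    rcases h with rfl | rfl | h
    · exact unpair1_div4_lt h2
    · exact unpair2_div4_lt h2
    · exact absurd h (by simp)
  · rw [if_neg h2] at h
    by_cases h3 : n % 4 = 3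
    · rw [if_pos h3] at h
      simp only [List.mem_singleton] at h
      subst h
      exact div4_lt h3
    · rw [if_neg h3] at h
      exact absurd h (by simp)

def subG (n : ℕ) (L : List (List ℕ)) : Option (List ℕ) :=
  if n % 4 = 2 then some (n :: (L.getD 0 [] ++ L.getD 1 []))
  else if n % 4 = 3 then some (n :: L.getD 0 [])
  else some [n]

lemma subG_pr : Primrec₂ subG := by
  have hget : ∀ k : ℕ, Primrec fun p : ℕ × List (List ℕ) => p.2.getD k [] := fun k =>
    (Primrec.list_getD ([] : List ℕ)).comp Primrec.snd (Primrec.const k)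
  exact Primrec.ite ((mod4_pr 2).comp Primrec.fst)
    (Primrec.option_some.comp (Primrec.list_cons.comp Primrec.fst
      (Primrec.list_append.comp (hget 0) (hget 1))))
    (Primrec.ite ((mod4_pr 3).comp Primrec.fst)
      (Primrec.option_some.comp (Primrec.list_cons.comp Primrec.fst (hget 0)))
      (Primrec.option_some.comp (Primrec.list_cons.comp Primrec.fst (Primrec.const []))))

lemma subC_pr : Primrec subC := by
  apply Primrec.nat_omega_rec' subC Primrec.id callsS_pr subG_pr callsS_lt
  intro n
  by_cases h2 : n % 4 = 2
  · rw [subC]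
    simp [subG, callsS, h2]
  · by_cases h3 : n % 4 = 3
    · rw [subC]
      simp [subG, callsS, h2, h3]
    · rw [subC]
      simp [subG, callsS, h2, h3]

/-! varsC is primitive recursive -/

def varsG (n : ℕ) (L : List (List ℕ)) : Option (List ℕ) :=
  if n % 4 = 2 then some (L.getD 0 [] ++ L.getD 1 [])
  else if n % 4 = 3 then some (L.getD 0 [])
  else if n % 4 = 0 then some [n / 4]
  else some []

lemma varsG_pr : Primrec₂ varsG := by
  have hget : ∀ k : ℕ, Primrec fun p : ℕ × List (List ℕ) => p.2.getD k [] := fun k =>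
    (Primrec.list_getD ([] : List ℕ)).comp Primrec.snd (Primrec.const k)
  exact Primrec.ite ((mod4_pr 2).comp Primrec.fst)
    (Primrec.option_some.comp (Primrec.list_append.comp (hget 0) (hget 1)))
    (Primrec.ite ((mod4_pr 3).comp Primrec.fst)
      (Primrec.option_some.comp (hget 0))
      (Primrec.ite ((mod4_pr 0).comp Primrec.fst)
        (Primrec.option_some.comp (Primrec.list_cons.comp (div4_pr.comp Primrec.fst)
          (Primrec.const [])))
        (Primrec.const (some []))))

lemma varsC_pr : Primrec varsC := by
  apply Primrec.nat_omega_rec' varsC Primrec.id callsS_pr varsG_pr callsS_lt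
  intro n
  by_cases h2 : n % 4 = 2
  · rw [varsC]
    simp [varsG, callsS, h2]
  · by_cases h3 : n % 4 = 3
    · rw [varsC]
      simp [varsG, callsS, h2, h3]
    · rw [varsC]
      by_cases h0 : n % 4 = 0 <;> simp [varsG, callsS, h0, h2, h3]

/-! evC is primitive recursive -/

def callsE (p : (List ℕ × List ℕ) × ℕ) : List ((List ℕ × List ℕ) × ℕ) :=
  if p.2 % 4 = 2 then
    [(p.1, (Nat.unpair (p.2 / 4)).1), (p.1, (Nat.unpair (p.2 / 4)).2)] else []

lemma callsE_pr : Primrec callsE :=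
  Primrec.ite ((mod4_pr 2).comp Primrec.snd)
    (Primrec.list_cons.comp (Primrec.pair Primrec.fst (up1_pr.comp Primrec.snd))
      (Primrec.list_cons.comp (Primrec.pair Primrec.fst (up2_pr.comp Primrec.snd))
        (Primrec.const [])))
    (Primrec.const [])

def evG (p : (List ℕ × List ℕ) × ℕ) (L : List Bool) : Option Bool :=
  if p.2 % 4 = 2 then some (!(L.getD 0 false) || L.getD 1 false)
  else if p.2 % 4 = 3 then some (decide ((p.2 / 4) ∈ p.1.2))
  else if p.2 % 4 = 0 then some (decide ((p.2 / 4) ∈ p.1.1))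
  else some false

lemma evG_pr : Primrec₂ evG := by
  have hget : ∀ k : ℕ, Primrec fun q : ((List ℕ × List ℕ) × ℕ) × List Bool =>
      q.2.getD k false := fun k =>
    (Primrec.list_getD false).comp Primrec.snd (Primrec.const k)
  have hm2 : PrimrecPred fun q : ((List ℕ × List ℕ) × ℕ) × List Bool => q.1.2 % 4 = 2 :=
    (mod4_pr 2).comp (Primrec.snd.comp Primrec.fst)
  have hm3 : PrimrecPred fun q : ((List ℕ × List ℕ) × ℕ) × List Bool => q.1.2 % 4 = 3 :=
    (mod4_pr 3).comp (Primrec.snd.comp Primrec.fst)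
  have hm0 : PrimrecPred fun q : ((List ℕ × List ℕ) × ℕ) × List Bool => q.1.2 % 4 = 0 :=
    (mod4_pr 0).comp (Primrec.snd.comp Primrec.fst)
  exact Primrec.ite hm2
    (Primrec.option_some.comp (Primrec.or.comp (Primrec.not.comp (hget 0)) (hget 1)))
    (Primrec.ite hm3
      (Primrec.option_some.comp (memB_pr.comp (div4_pr.comp (Primrec.snd.comp Primrec.fst))
        (Primrec.snd.comp (Primrec.fst.comp Primrec.fst))))
      (Primrec.ite hm0
        (Primrec.option_some.comp (memB_pr.comp (div4_pr.comp (Primrec.snd.comp Primrec.fst))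
          (Primrec.fst.comp (Primrec.fst.comp Primrec.fst))))
        (Primrec.const (some false))))

lemma callsE_lt : ∀ p, ∀ q ∈ callsE p, q.2 < p.2 := by
  intro p q h
  rw [callsE] at h
  by_cases h2 : p.2 % 4 = 2
  · rw [if_pos h2] at h
    simp only [List.mem_cons, List.mem_singleton] at h
    rcases h with rfl | rfl | h
    · exact unpair1_div4_lt h2
    · exact unpair2_div4_lt h2
    · exact absurd h (by simp)
  · rw [if_neg h2] at h
    exact absurd h (by simp)

lemma evP_pr : Primrec fun q : (List ℕ × List ℕ) × ℕ => evC q.1.1 q.1.2 q.2 := by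
  apply Primrec.nat_omega_rec' (fun q : (List ℕ × List ℕ) × ℕ => evC q.1.1 q.1.2 q.2)
    (Primrec.snd) callsE_pr evG_pr callsE_lt
  intro p
  by_cases h2 : p.2 % 4 = 2
  · rw [evC]
    simp [evG, callsE, h2]
  · by_cases h3 : p.2 % 4 = 3
    · rw [evC]
      simp [evG, callsE, h2, h3]
    · rw [evC]
      by_cases h0 : p.2 % 4 = 0 <;> simp [evG, callsE, h0, h2, h3]

end Prim
/-! ### Primitive recursiveness: assembly -/

section PrimAsm

lemma SLC_pr : Primrec SLC :=
  Primrec.list_cons.comp (Primrec.const 1)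
    (Primrec.list_cons.comp (Primrec.const topC)
      (Primrec.listFilterMap subC_pr
        (Primrec.ite ((mod4_pr 3).comp Primrec.snd)
          (Primrec.option_some.comp (div4_pr.comp Primrec.snd)) (Primrec.const none))))

lemma vsC_pr : Primrec vsC :=
  Primrec.list_append.comp varsC_pr
    (Primrec.list_flatMap SLC_pr (varsC_pr.comp Primrec.snd))

lemma forms5_pr : Primrec₂ (fun u w : ℕ =>
    [impC u w, impC (boxC u) w, impC u (negC w), impC (boxC u) (negC w),
      impC (boxC u) (negC (boxC w))]) := by
  have e1 : Primrec fun p : ℕ × ℕ => impC p.1 p.2 := impC_pr.comp Primrec.fst Primrec.snd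
  have e2 : Primrec fun p : ℕ × ℕ => impC (boxC p.1) p.2 :=
    impC_pr.comp (boxC_pr.comp Primrec.fst) Primrec.snd
  have e3 : Primrec fun p : ℕ × ℕ => impC p.1 (negC p.2) :=
    impC_pr.comp Primrec.fst (negC_pr.comp Primrec.snd)
  have e4 : Primrec fun p : ℕ × ℕ => impC (boxC p.1) (negC p.2) :=
    impC_pr.comp (boxC_pr.comp Primrec.fst) (negC_pr.comp Primrec.snd)
  have e5 : Primrec fun p : ℕ × ℕ => impC (boxC p.1) (negC (boxC p.2)) :=
    impC_pr.comp (boxC_pr.comp Primrec.fst) (negC_pr.comp (boxC_pr.comp Primrec.snd))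
  exact Primrec.list_cons.comp e1 (Primrec.list_cons.comp e2 (Primrec.list_cons.comp e3
    (Primrec.list_cons.comp e4 (Primrec.list_cons.comp e5 (Primrec.const [])))))

lemma GLC_pr : Primrec GLC := by
  apply Primrec.list_flatMap SLC_pr
  exact Primrec.list_flatMap (SLC_pr.comp Primrec.fst)
    (forms5_pr.comp (Primrec.snd.comp Primrec.fst) Primrec.snd)

variable (hp hd hf : Bool)

lemma reachP_pr : Primrec fun q : List ℕ × ℕ × ℕ => reachC hf q.1 q.2.1 q.2.2 := by
  have m1 : Primrec fun q : List ℕ × ℕ × ℕ => decide (impC q.2.1 q.2.2 ∈ q.1) :=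
    memB_pr.comp (impC_pr.comp (Primrec.fst.comp Primrec.snd)
      (Primrec.snd.comp Primrec.snd)) Primrec.fst
  have m2 : Primrec fun q : List ℕ × ℕ × ℕ => decide (impC (boxC q.2.1) q.2.2 ∈ q.1) :=
    memB_pr.comp (impC_pr.comp (boxC_pr.comp (Primrec.fst.comp Primrec.snd))
      (Primrec.snd.comp Primrec.snd)) Primrec.fst
  exact Primrec.or.comp m1 (Primrec.and.comp (Primrec.const hf) m2)

lemma orthP_pr : Primrec fun q : List ℕ × ℕ × ℕ => orthC hf q.1 q.2.1 q.2.2 := by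
  have u' : Primrec fun q : List ℕ × ℕ × ℕ => q.2.1 := Primrec.fst.comp Primrec.snd
  have w' : Primrec fun q : List ℕ × ℕ × ℕ => q.2.2 := Primrec.snd.comp Primrec.snd
  have m1 : Primrec fun q : List ℕ × ℕ × ℕ => decide (impC q.2.1 (negC q.2.2) ∈ q.1) :=
    memB_pr.comp (impC_pr.comp u' (negC_pr.comp w')) Primrec.fst
  have m2 : Primrec fun q : List ℕ × ℕ × ℕ => decide (impC (boxC q.2.1) (negC q.2.2) ∈ q.1) :=
    memB_pr.comp (impC_pr.comp (boxC_pr.comp u') (negC_pr.comp w')) Primrec.fst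
  have m3 : Primrec fun q : List ℕ × ℕ × ℕ => decide (impC (boxC q.2.2) (negC q.2.1) ∈ q.1) :=
    memB_pr.comp (impC_pr.comp (boxC_pr.comp w') (negC_pr.comp u')) Primrec.fst
  have m4 : Primrec fun q : List ℕ × ℕ × ℕ =>
      decide (impC (boxC q.2.1) (negC (boxC q.2.2)) ∈ q.1) :=
    memB_pr.comp (impC_pr.comp (boxC_pr.comp u') (negC_pr.comp (boxC_pr.comp w'))) Primrec.fst
  exact Primrec.or.comp m1 (Primrec.and.comp (Primrec.const hf)
    (Primrec.or.comp (Primrec.or.comp m2 m3) m4))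

lemma hypP_pr : Primrec₂ (fun (n : ℕ) (T : List ℕ) => hypC hp hd hf n T) := by
  have hbody : Primrec fun q : ((ℕ × List ℕ) × ℕ) × ℕ =>
      ((if reachC hf q.1.1.2 q.1.2 q.2 then [impC (boxC q.1.2) (boxC q.2)] else []) ++
        (if hd && orthC hf q.1.1.2 q.1.2 q.2 then [impC (boxC q.1.2) (negC (boxC q.2))]
          else [])) := by
    have hT : Primrec fun q : ((ℕ × List ℕ) × ℕ) × ℕ => q.1.1.2 :=
      Primrec.snd.comp (Primrec.fst.comp Primrec.fst)
    have hu : Primrec fun q : ((ℕ × List ℕ) × ℕ) × ℕ => q.1.2 :=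
      Primrec.snd.comp Primrec.fst
    have hw : Primrec fun q : ((ℕ × List ℕ) × ℕ) × ℕ => q.2 := Primrec.snd
    have hr : Primrec fun q : ((ℕ × List ℕ) × ℕ) × ℕ => reachC hf q.1.1.2 q.1.2 q.2 :=
      (reachP_pr hf).comp (Primrec.pair hT (Primrec.pair hu hw))
    have ho : Primrec fun q : ((ℕ × List ℕ) × ℕ) × ℕ =>
        (hd && orthC hf q.1.1.2 q.1.2 q.2) :=
      Primrec.and.comp (Primrec.const hd)
        ((orthP_pr hf).comp (Primrec.pair hT (Primrec.pair hu hw)))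
    have l1 : Primrec fun q : ((ℕ × List ℕ) × ℕ) × ℕ => [impC (boxC q.1.2) (boxC q.2)] :=
      Primrec.list_cons.comp (impC_pr.comp (boxC_pr.comp hu) (boxC_pr.comp hw))
        (Primrec.const [])
    have l2 : Primrec fun q : ((ℕ × List ℕ) × ℕ) × ℕ =>
        [impC (boxC q.1.2) (negC (boxC q.2))] :=
      Primrec.list_cons.comp
        (impC_pr.comp (boxC_pr.comp hu) (negC_pr.comp (boxC_pr.comp hw))) (Primrec.const [])
    exact Primrec.list_append.comp
      (Primrec.ite (PrimrecRel.comp Primrec.eq hr (Primrec.const true)) l1 (Primrec.const []))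
      (Primrec.ite (PrimrecRel.comp Primrec.eq ho (Primrec.const true)) l2 (Primrec.const []))
  have hinner : Primrec₂ fun (p : ℕ × List ℕ) (u : ℕ) =>
      (SLC p.1).flatMap fun w =>
        ((if reachC hf p.2 u w then [impC (boxC u) (boxC w)] else []) ++
          (if hd && orthC hf p.2 u w then [impC (boxC u) (negC (boxC w))] else [])) :=
    Primrec.list_flatMap (SLC_pr.comp (Primrec.fst.comp Primrec.fst)) hbody.to₂
  have hflat : Primrec fun p : ℕ × List ℕ =>
      (SLC p.1).flatMap fun u => (SLC p.1).flatMap fun w =>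
        ((if reachC hf p.2 u w then [impC (boxC u) (boxC w)] else []) ++
          (if hd && orthC hf p.2 u w then [impC (boxC u) (negC (boxC w))] else [])) :=
    Primrec.list_flatMap (SLC_pr.comp Primrec.fst) hinner
  exact (Primrec.list_cons.comp (Primrec.const (boxC topC))
    (Primrec.list_append.comp (Primrec.const (if hp then [negC (boxC 1)] else [])) hflat)).to₂

lemma all_eq_foldr {α : Type*} (l : List α) (p : α → Bool) :
    l.all p = l.foldr (fun b r => p b && r) true := by
  induction l with
  | nil => rfl
  | cons a l ih => simp [List.all_cons, ih]

lemma list_all_pr {α β : Type*} [Primcodable α] [Primcodable β]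
    {f : α → List β} {p : α → β → Bool} (hl : Primrec f) (hp : Primrec₂ p) :
    Primrec fun a => (f a).all (p a) := by
  have h : Primrec fun a => (f a).foldr (fun b r => p a b && r) true :=
    Primrec.list_foldr hl (Primrec.const true)
      (Primrec.and.comp (hp.comp Primrec.fst (Primrec.fst.comp Primrec.snd))
        (Primrec.snd.comp Primrec.snd)).to₂
  exact h.of_eq fun a => (all_eq_foldr _ _).symm

lemma subsetsOf_eq {α : Type*} :
    ∀ l : List α, subsetsOf l = l.foldr (fun a acc => acc ++ acc.map (a :: ·)) [[]] := by
  intro l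
  induction l with
  | nil => rfl
  | cons a l ih => rw [subsetsOf, ih]; rfl

lemma subsetsOf_pr {α : Type*} [Primcodable α] : Primrec (@subsetsOf α) := by
  have h : Primrec₂ (fun (_ : List α) (p : α × List (List α)) => p.2 ++ p.2.map (p.1 :: ·)) :=
    (Primrec.list_append.comp (Primrec.snd.comp Primrec.snd)
      (Primrec.list_map (Primrec.snd.comp Primrec.snd)
        (Primrec.list_cons.comp (Primrec.fst.comp (Primrec.snd.comp Primrec.fst))
          Primrec.snd).to₂)).to₂
  exact ((Primrec.list_foldr Primrec.id (Primrec.const [[]]) h).of_eq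
    fun l => (subsetsOf_eq l).symm)

set_option maxHeartbeats 2000000 in
lemma chkP_pr : Primrec fun q : ℕ × List ℕ × ℕ => chkC hp hd hf q.1 q.2.1 q.2.2 := by
  have hev : Primrec fun r : ((List ℕ × List ℕ) × ℕ) => evC r.1.1 r.1.2 r.2 := evP_pr
  -- innermost: context γ = ((ℕ × List ℕ × ℕ) × List ℕ) × List ℕ  (q, lv, lb)
  have hhyp : Primrec fun c : ((ℕ × List ℕ × ℕ) × List ℕ) × List ℕ =>
      hypC hp hd hf c.1.1.1 c.1.1.2.1 :=
    (hypP_pr hp hd hf).comp (Primrec.fst.comp (Primrec.fst.comp Primrec.fst))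
      (Primrec.fst.comp (Primrec.snd.comp (Primrec.fst.comp Primrec.fst)))
  have hlv : Primrec fun c : ((ℕ × List ℕ × ℕ) × List ℕ) × List ℕ => c.1.2 :=
    Primrec.snd.comp Primrec.fst
  have hlb : Primrec fun c : ((ℕ × List ℕ × ℕ) × List ℕ) × List ℕ => c.2 := Primrec.snd
  have hallhyp : Primrec fun c : ((ℕ × List ℕ × ℕ) × List ℕ) × List ℕ =>
      (hypC hp hd hf c.1.1.1 c.1.1.2.1).all fun h => evC c.1.2 c.2 h :=
    list_all_pr hhyp
      ((hev.comp (Primrec.pair (Primrec.pair (hlv.comp Primrec.fst) (hlb.comp Primrec.fst))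
        Primrec.snd)).to₂)
  have hevX : Primrec fun c : ((ℕ × List ℕ × ℕ) × List ℕ) × List ℕ =>
      evC c.1.2 c.2 c.1.1.2.2 :=
    hev.comp (Primrec.pair (Primrec.pair hlv hlb)
      (Primrec.snd.comp (Primrec.snd.comp (Primrec.fst.comp Primrec.fst))))
  have hbody : Primrec fun c : ((ℕ × List ℕ × ℕ) × List ℕ) × List ℕ =>
      (!((hypC hp hd hf c.1.1.1 c.1.1.2.1).all fun h => evC c.1.2 c.2 h)
        || evC c.1.2 c.2 c.1.1.2.2) :=
    Primrec.or.comp (Primrec.not.comp hallhyp) hevX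
  have hmid : Primrec fun b : (ℕ × List ℕ × ℕ) × List ℕ =>
      (subsetsOf (SLC b.1.1)).all fun lb =>
        (!((hypC hp hd hf b.1.1 b.1.2.1).all fun h => evC b.2 lb h) || evC b.2 lb b.1.2.2) :=
    list_all_pr (subsetsOf_pr.comp (SLC_pr.comp (Primrec.fst.comp Primrec.fst))) hbody.to₂
  have houter : Primrec fun q : ℕ × List ℕ × ℕ =>
      (subsetsOf (vsC q.1)).all fun lv =>
        (subsetsOf (SLC q.1)).all fun lb =>
          (!((hypC hp hd hf q.1 q.2.1).all fun h => evC lv lb h) || evC lv lb q.2.2) :=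
    list_all_pr (subsetsOf_pr.comp (vsC_pr.comp Primrec.fst)) hmid.to₂
  exact houter.of_eq fun q => rfl

lemma filter_eq_filterMap {α : Type*} (p : α → Bool) :
    ∀ l : List α, l.filter p = l.filterMap (fun b => if p b then some b else none) := by
  intro l
  induction l with
  | nil => rfl
  | cons a l ih =>
      by_cases h : p a <;> simp [List.filter_cons, List.filterMap_cons, h, ih]

lemma stepP_pr : Primrec₂ (fun (n : ℕ) (T : List ℕ) => stepC hp hd hf n T) := by
  have hc : Primrec fun c : (ℕ × List ℕ) × ℕ => chkC hp hd hf c.1.1 c.1.2 c.2 :=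
    (chkP_pr hp hd hf).comp (Primrec.pair (Primrec.fst.comp Primrec.fst)
      (Primrec.pair (Primrec.snd.comp Primrec.fst) Primrec.snd))
  have h : Primrec fun p : ℕ × List ℕ =>
      (GLC p.1).filterMap fun X => if chkC hp hd hf p.1 p.2 X then some X else none :=
    Primrec.listFilterMap (GLC_pr.comp Primrec.fst)
      (Primrec.ite (PrimrecRel.comp Primrec.eq hc (Primrec.const true))
        (Primrec.option_some.comp Primrec.snd) (Primrec.const none)).to₂
  exact (h.of_eq fun p => (filter_eq_filterMap _ _).symm).to₂

lemma mainP_pr : Primrec (mainC hp hd hf) := by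
  have hsat : Primrec fun n : ℕ => satC hp hd hf n ((GLC n).length + 1) := by
    have := Primrec.nat_rec' (f := fun n : ℕ => (GLC n).length + 1)
      (g := fun _ : ℕ => ([] : List ℕ))
      (h := fun (n : ℕ) (p : ℕ × List ℕ) => stepC hp hd hf n p.2)
      (Primrec.succ.comp (Primrec.list_length.comp GLC_pr)) (Primrec.const [])
      ((stepP_pr hp hd hf).comp Primrec.fst (Primrec.snd.comp Primrec.snd)).to₂
    exact this.of_eq fun n => rfl
  have h : Primrec fun n : ℕ => chkC hp hd hf n (satC hp hd hf n ((GLC n).length + 1)) n :=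
    (chkP_pr hp hd hf).comp (Primrec.pair Primrec.id (Primrec.pair hsat Primrec.id))
  exact h.of_eq fun n => rfl

end PrimAsm

/-! ### The main theorem -/

section Main

lemma prv_iff_code (hp hd hf : Bool) (A : Fml) :
    Prv hp hd hf A ↔ mainC hp hd hf (encodeFml A) = true := by
  rw [mainC_enc]
  exact prv_iff_mainB

lemma mainC_computable (hp hd hf : Bool) : Computable (mainC hp hd hf) :=
  (mainP_pr hp hd hf).to_comp

lemma axFlags_MN : axFlags false false false = (fun _ => False) := by
  funext B
  apply propext
  constructor
  · rintro (⟨h, _⟩ | ⟨h, _⟩ | ⟨h, _⟩) <;> exact Bool.false_ne_true h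
  · exact False.elim

lemma axFlags_MNP : axFlags true false false = AxP := by
  funext B
  apply propext
  constructor
  · rintro (⟨_, h⟩ | ⟨h, _⟩ | ⟨h, _⟩)
    · exact h
    · exact absurd h (Bool.false_ne_true)
    · exact absurd h (Bool.false_ne_true)
  · intro h
    exact Or.inl ⟨rfl, h⟩

lemma axFlags_MND : axFlags false true false = AxD := by
  funext B
  apply propext
  constructor
  · rintro (⟨h, _⟩ | ⟨_, h⟩ | ⟨h, _⟩)
    · exact absurd h (Bool.false_ne_true)
    · exact h
    · exact absurd h (Bool.false_ne_true)
  · intro h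
    exact Or.inr (Or.inl ⟨rfl, h⟩)

lemma axFlags_MNF : axFlags false false true = AxF := by
  funext B
  apply propext
  constructor
  · rintro (⟨h, _⟩ | ⟨h, _⟩ | ⟨_, h⟩)
    · exact absurd h (Bool.false_ne_true)
    · exact absurd h (Bool.false_ne_true)
    · exact h
  · intro h
    exact Or.inr (Or.inr ⟨rfl, h⟩)

lemma axFlags_MNPF : axFlags true false true = (fun A => AxP A ∨ AxF A) := by
  funext B
  apply propext
  constructor
  · rintro (⟨_, h⟩ | ⟨h, _⟩ | ⟨_, h⟩)
    · exact Or.inl h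
    · exact absurd h (Bool.false_ne_true)
    · exact Or.inr h
  · rintro (h | h)
    · exact Or.inl ⟨rfl, h⟩
    · exact Or.inr (Or.inr ⟨rfl, h⟩)

lemma axFlags_MNDF : axFlags false true true = (fun A => AxD A ∨ AxF A) := by
  funext B
  apply propext
  constructor
  · rintro (⟨h, _⟩ | ⟨_, h⟩ | ⟨_, h⟩)
    · exact absurd h (Bool.false_ne_true)
    · exact Or.inl h
    · exact Or.inr h
  · rintro (h | h)
    · exact Or.inr (Or.inl ⟨rfl, h⟩)
    · exact Or.inr (Or.inr ⟨rfl, h⟩)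

end Main

end S17


/-- For each L among MN, MNF, MNP, MND, MNPF, MNDF, the set of
theorems of L is decidable: there is a computable function deciding, given (the
code of) a modal formula A, whether A is a theorem of L. -/
theorem stmt17 (L : Fml → Prop)
    (hL : L = MN ∨ L = MNF ∨ L = MNP ∨ L = MND ∨ L = MNPF ∨ L = MNDF) :
    ∃ f : ℕ → Bool, Computable f ∧ ∀ A : Fml, (L A ↔ f (encodeFml A) = true) := by
  rcases hL with rfl | rfl | rfl | rfl | rfl | rfl
  · refine ⟨S17.mainC false false false, S17.mainC_computable _ _ _, fun A => ?_⟩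
    rw [MN, ← S17.axFlags_MN]
    exact S17.prv_iff_code false false false A
  · refine ⟨S17.mainC false false true, S17.mainC_computable _ _ _, fun A => ?_⟩
    rw [MNF, ← S17.axFlags_MNF]
    exact S17.prv_iff_code false false true A
  · refine ⟨S17.mainC true false false, S17.mainC_computable _ _ _, fun A => ?_⟩
    rw [MNP, ← S17.axFlags_MNP]
    exact S17.prv_iff_code true false false A
  · refine ⟨S17.mainC false true false, S17.mainC_computable _ _ _, fun A => ?_⟩
    rw [MND, ← S17.axFlags_MND]
    exact S17.prv_iff_code false true false A
  · refine ⟨S17.mainC true false true, S17.mainC_computable _ _ _, fun A => ?_⟩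
    rw [MNPF, ← S17.axFlags_MNPF]
    exact S17.prv_iff_code true false true A
  · refine ⟨S17.mainC false true true, S17.mainC_computable _ _ _, fun A => ?_⟩
    rw [MNDF, ← S17.axFlags_MNDF]
    exact S17.prv_iff_code false true true A
end

section
/- Let L be any of the logics MN, MNF, MNP, MND, MNPF, MNDF. If a modal formula A is not a theorem of L, then there exist a finite MN-frame (W, ≺) of the corresponding frame class (arbitrary for MN; transitive for MNF; MNP-frame for MNP; MND-frame for MND; transitive MNP-frame for MNPF; transitive MND-frame for MNDF), a satisfaction relation ⊩ on (W, ≺), and a world x ∈ W such that x ⊮ A. -/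
/-!
Finite canonical models. The worlds are the consistent subsets of the subformulas `Γ` of `A`, and
a world `x` sees a nonempty set `V` of worlds when every `□B ∈ x` is witnessed in `V` by `B` (for
the transitive logics also by `□B`). A world omitting `A` exists since `A` is not a theorem, and it
refutes `A` by the truth lemma: if `□B ∉ x`, then `x` sees the worlds without `B`, for otherwise
propositional completeness over the worlds followed by Necessitation, RM (and 4) would force
`□B ∈ x`. Transitivity holds because a witness of `□B` in `V` passes the demand on to the sets it
sees. The axiom P (which D implies) makes `x` see all worlds, and D makes `x` see `V` or `Vᶜ`:
otherwise `x` would contain `□B` and `□C` with `⊢ □B → □¬D` and `⊢ □C → □D` for some `D`.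
-/

namespace Fml

def sf : Fml → Finset Fml
  | var n => {var n}
  | bot => {bot}
  | imp A B => insert (imp A B) (sf A ∪ sf B)
  | box A => insert (box A) (sf A)

theorem mem_sf_self (A : Fml) : A ∈ sf A := by
  cases A <;> simp [sf]

theorem sf_subset_of_mem {A B : Fml} (h : B ∈ sf A) : sf B ⊆ sf A := by
  induction A with
  | var n | bot => simp_all [sf]
  | imp A C ihA ihC =>
    simp only [sf, Finset.mem_insert, Finset.mem_union] at h
    rcases h with rfl | h | h
    · rfl
    · exact (ihA h).trans fun D hD => by simp [sf, hD]
    · exact (ihC h).trans fun D hD => by simp [sf, hD]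
  | box A ih =>
    simp only [sf, Finset.mem_insert] at h
    rcases h with rfl | h
    · rfl
    · exact (ih h).trans fun D hD => by simp [sf, hD]

end Fml

structure SubformulaClosed (Γ : Finset Fml) : Prop where
  imp_left {B C : Fml} : B.imp C ∈ Γ → B ∈ Γ
  imp_right {B C : Fml} : B.imp C ∈ Γ → C ∈ Γ
  box {B : Fml} : B.box ∈ Γ → B ∈ Γ

theorem subformulaClosed_sf (A : Fml) : SubformulaClosed A.sf where
  imp_left h := Fml.sf_subset_of_mem h (by simp [Fml.sf, Fml.mem_sf_self])
  imp_right h := Fml.sf_subset_of_mem h (by simp [Fml.sf, Fml.mem_sf_self])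
  box h := Fml.sf_subset_of_mem h (by simp [Fml.sf, Fml.mem_sf_self])

structure IsValuation (v : Fml → Bool) : Prop where
  bot : v .bot = false
  imp (B C : Fml) : v (.imp B C) = (!v B || v C)

namespace IsValuation

variable {v : Fml → Bool}

theorem imp_iff (hv : IsValuation v) (B C : Fml) :
    v (B.imp C) = true ↔ (v B = true → v C = true) := by
  cases h : v B <;> simp [hv.imp, h]

theorem neg_iff (hv : IsValuation v) (B : Fml) : v B.neg = true ↔ ¬v B = true := by
  simp [Fml.neg, hv.imp_iff, hv.bot]

end IsValuation

def Entails (Δ : Finset Fml) (A : Fml) : Prop :=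
  ∀ v, IsValuation v → (∀ E ∈ Δ, v E = true) → v A = true

namespace MNProv

variable {Ax : Fml → Prop}

theorem of_entails {Δ : Finset Fml} {A : Fml} (hΔ : ∀ E ∈ Δ, MNProv Ax E) (h : Entails Δ A) :
    MNProv Ax A := by
  induction Δ using Finset.induction_on generalizing A with
  | empty => exact .taut fun v h₀ h₁ => h v ⟨h₀, h₁⟩ (by simp)
  | insert E Δ _ ih =>
    refine .mp (ih (fun F hF => hΔ F (by simp [hF])) fun v hv hΔv => ?_) (hΔ E (by simp))
    rw [hv.imp_iff]
    exact fun hE => h v hv (Finset.forall_mem_insert .. |>.2 ⟨hE, hΔv⟩)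

theorem top : MNProv Ax Fml.top :=
  of_entails (Δ := ∅) (by simp) fun v hv _ => by simp [Fml.top, hv.neg_iff, hv.bot]

end MNProv

/-- This is the consistency of the conjunction of the `Γ`-literals of `S`, phrased without building
that conjunction: every theorem is true under some valuation making exactly `S` true on `Γ`. -/
def Consistent (Ax : Fml → Prop) (Γ S : Finset Fml) : Prop :=
  ∀ G, MNProv Ax G → ∃ v, IsValuation v ∧ (∀ B ∈ Γ, (v B = true ↔ B ∈ S)) ∧ v G = true

@[ext]
structure World (Ax : Fml → Prop) (Γ : Finset Fml) where
  carrier : Finset Fml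
  subset : carrier ⊆ Γ
  consistent : Consistent Ax Γ carrier

namespace World

variable {Ax : Fml → Prop} {Γ : Finset Fml}

instance : Membership Fml (World Ax Γ) := ⟨fun x B => B ∈ x.carrier⟩

instance : Finite (World Ax Γ) :=
  Finite.of_injective
    (fun x : World Ax Γ => (⟨x.carrier, Finset.mem_powerset.2 x.subset⟩ : Γ.powerset))
    fun _ _ h => World.ext (congrArg Subtype.val h)

theorem exists_valuation (x : World Ax Γ) {G : Fml} (hG : MNProv Ax G) :
    ∃ v, IsValuation v ∧ (∀ B ∈ Γ, (v B = true ↔ B ∈ x)) ∧ v G = true :=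
  x.consistent G hG

theorem bot_not_mem (x : World Ax Γ) : Fml.bot ∉ x := by
  intro h
  obtain ⟨v, hv, hx, -⟩ := x.exists_valuation MNProv.top
  simpa [hv.bot] using (hx _ (x.subset h)).2 h

theorem imp_mem_iff (x : World Ax Γ) {B C : Fml} (hB : B ∈ Γ) (hC : C ∈ Γ)
    (hBC : B.imp C ∈ Γ) : B.imp C ∈ x ↔ (B ∈ x → C ∈ x) := by
  obtain ⟨v, hv, hx, -⟩ := x.exists_valuation MNProv.top
  rw [← hx _ hBC, ← hx _ hB, ← hx _ hC, hv.imp_iff]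

theorem mem_of_provable (x : World Ax Γ) {B : Fml} (hB : B ∈ Γ) (h : MNProv Ax B) : B ∈ x := by
  obtain ⟨v, -, hx, hvB⟩ := x.exists_valuation h
  exact (hx B hB).1 hvB

theorem mem_of_provable_imp (x : World Ax Γ) {B C : Fml} (hB : B ∈ Γ) (hC : C ∈ Γ)
    (h : MNProv Ax (B.imp C)) (hBx : B ∈ x) : C ∈ x := by
  obtain ⟨v, hv, hx, hvBC⟩ := x.exists_valuation h
  rw [hv.imp_iff, hx B hB, hx C hC] at hvBC
  exact hvBC hBx

theorem not_mem_of_provable_neg (x : World Ax Γ) {B : Fml} (hB : B ∈ Γ)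
    (h : MNProv Ax B.neg) : B ∉ x := by
  obtain ⟨v, hv, hx, hvB⟩ := x.exists_valuation h
  rwa [hv.neg_iff, hx B hB] at hvB

theorem not_mem_of_provable_imp_neg (x : World Ax Γ) {B C : Fml} (hB : B ∈ Γ) (hC : C ∈ Γ)
    (h : MNProv Ax (B.imp C.neg)) (hBx : B ∈ x) : C ∉ x := by
  obtain ⟨v, hv, hx, hvBC⟩ := x.exists_valuation h
  rw [hv.imp_iff, hv.neg_iff, hx B hB, hx C hC] at hvBC
  exact hvBC hBx

end World

section Completeness

variable {Ax : Fml → Prop} {Γ : Finset Fml}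

theorem provable_of_forall_world {G : Fml}
    (h : ∀ y : World Ax Γ, ∀ v, IsValuation v → (∀ B ∈ Γ, (v B = true ↔ B ∈ y)) →
      v G = true) :
    MNProv Ax G := by
  -- each inconsistent `S` is refuted by a theorem `H S`, and these theorems entail `G`
  have hwit : ∀ S : Finset Fml, ∃ H, MNProv Ax H ∧ (Consistent Ax Γ S ∨
      ∀ v, IsValuation v → (∀ B ∈ Γ, (v B = true ↔ B ∈ S)) → v H ≠ true) := by
    intro S
    by_cases hS : Consistent Ax Γ S
    · exact ⟨_, MNProv.top, .inl hS⟩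
    · simp only [Consistent, not_forall, not_exists, not_and] at hS
      obtain ⟨H, hH, hS⟩ := hS
      exact ⟨H, hH, .inr hS⟩
  choose H hH hHS using hwit
  refine MNProv.of_entails (Δ := Γ.powerset.image H) (by simp [hH]) fun v hv hvH => ?_
  set S := Γ.filter (v · = true)
  have hS : ∀ B ∈ Γ, (v B = true ↔ B ∈ S) := fun B hB => by simp [S, hB]
  have hSΓ : S ⊆ Γ := Finset.filter_subset _ _
  rcases hHS S with hcons | hincons
  · exact h ⟨S, hSΓ, hcons⟩ v hv hS
  · exact absurd (hvH _ (Finset.mem_image_of_mem _ (Finset.mem_powerset.2 hSΓ))) (hincons v hv hS)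

theorem provable_of_forall_mem {B : Fml} (hB : B ∈ Γ) (h : ∀ y : World Ax Γ, B ∈ y) :
    MNProv Ax B :=
  provable_of_forall_world fun y _ _ hy => (hy B hB).2 (h y)

theorem provable_imp_of_forall_mem {B C : Fml} (hB : B ∈ Γ) (hC : C ∈ Γ)
    (h : ∀ y : World Ax Γ, B ∈ y → C ∈ y) : MNProv Ax (B.imp C) :=
  provable_of_forall_world fun y _ hv hy => by
    rw [hv.imp_iff, hy B hB, hy C hC]
    exact h y

theorem provable_neg_of_forall_not_mem {B : Fml} (hB : B ∈ Γ)
    (h : ∀ y : World Ax Γ, B ∉ y) : MNProv Ax B.neg :=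
  provable_of_forall_world fun y _ hv hy => by
    rw [hv.neg_iff, hy B hB]
    exact h y

theorem provable_imp_neg_of_forall_mem {B C : Fml} (hB : B ∈ Γ) (hC : C ∈ Γ)
    (h : ∀ y : World Ax Γ, B ∈ y → C ∉ y) : MNProv Ax (B.imp C.neg) :=
  provable_of_forall_world fun y _ hv hy => by
    rw [hv.imp_iff, hv.neg_iff, hy B hB, hy C hC]
    exact h y

theorem exists_world_not_mem {A : Fml} (hA : ¬MNProv Ax A) (hAΓ : A ∈ Γ) :
    ∃ x : World Ax Γ, A ∉ x := by
  by_contra! h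
  exact hA (provable_of_forall_mem hAΓ h)

end Completeness

def MNFrame.sat {W : Type*} (F : MNFrame W) (val : W → ℕ → Prop) : W → Fml → Prop
  | x, .var n => val x n
  | _, .bot => False
  | x, .imp B C => F.sat val x B → F.sat val x C
  | x, .box B => ∀ V, F.rel x V → ∃ y ∈ V, F.sat val y B

theorem MNFrame.isSat_sat {W : Type*} (F : MNFrame W) (val : W → ℕ → Prop) :
    IsSat F (F.sat val) where
  bot _ := id
  imp _ _ _ := Iff.rfl
  box _ _ := Iff.rfl

/-- A world containing `□B` sees only sets in which every formula of `Φ B` holds somewhere. -/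
structure IsDemand (Ax : Fml → Prop) (Φ : Fml → Set Fml) : Prop where
  self_mem (B : Fml) : B ∈ Φ B
  subset (B : Fml) : Φ B ⊆ {B, B.box}
  box_imp_box {B D : Fml} : D ∈ Φ B → MNProv Ax (B.box.imp D.box)

namespace IsDemand

variable {Ax : Fml → Prop} {Φ : Fml → Set Fml}

theorem mem_of_box_mem (hΦ : IsDemand Ax Φ) {Γ : Finset Fml} (hΓ : SubformulaClosed Γ)
    {B D : Fml} (hB : B.box ∈ Γ) (hD : D ∈ Φ B) : D ∈ Γ := by
  rcases hΦ.subset B hD with rfl | rfl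
  exacts [hΓ.box hB, hB]

theorem singleton : IsDemand Ax fun B => {B} where
  self_mem B := rfl
  subset B := by simp
  box_imp_box {B D} hD := by
    rw [Set.mem_singleton_iff.1 hD]
    exact MNProv.of_entails (Δ := ∅) (by simp) fun v hv _ => by simp [hv.imp_iff]

theorem pair (h4 : ∀ B : Fml, MNProv Ax (B.box.imp B.box.box)) :
    IsDemand Ax fun B => {B, B.box} where
  self_mem B := by simp
  subset B := subset_rfl
  box_imp_box {B D} hD := by
    rcases hD with rfl | rfl
    · exact singleton.box_imp_box rfl
    · exact h4 B

end IsDemand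

section CanonicalFrame

variable {Ax : Fml → Prop} {Γ : Finset Fml} {Φ : Fml → Set Fml}

def canonicalRel (Φ : Fml → Set Fml) (x : World Ax Γ) (V : Set (World Ax Γ)) : Prop :=
  V.Nonempty ∧ ∀ B : Fml, B.box ∈ Γ → B.box ∈ x → ∀ D ∈ Φ B, ∃ y ∈ V, D ∈ y

def canonicalFrame (Ax : Fml → Prop) (Γ : Finset Fml) (Φ : Fml → Set Fml)
    [Nonempty (World Ax Γ)] : MNFrame (World Ax Γ) where
  nonempty := ‹_›
  rel := canonicalRel Φ
  rel_nonempty _ _ h := h.1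
  mono _ _ _ h hVU := ⟨h.1.mono hVU, fun B hB hBx D hD =>
    (h.2 B hB hBx D hD).imp fun _ hy => ⟨hVU hy.1, hy.2⟩⟩

def canonicalVal (x : World Ax Γ) (n : ℕ) : Prop := Fml.var n ∈ x

theorem canonicalRel_setOf_not_mem (hΦ : IsDemand Ax Φ) (hΓ : SubformulaClosed Γ)
    {x : World Ax Γ} {B : Fml} (hB : B.box ∈ Γ) (hBx : B.box ∉ x) :
    canonicalRel Φ x {y | B ∉ y} := by
  have hBΓ := hΓ.box hB
  constructor
  · obtain ⟨y, hy⟩ : ∃ y : World Ax Γ, B ∉ y := by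
      by_contra! hall
      exact hBx (x.mem_of_provable hB (provable_of_forall_mem hBΓ hall).nec)
    exact ⟨y, hy⟩
  · intro C hC hCx D hD
    by_contra! hall
    have hDB : MNProv Ax (D.imp B) :=
      provable_imp_of_forall_mem (hΦ.mem_of_box_mem hΓ hC hD) hBΓ fun y hDy => by
        by_contra hBy
        exact hall y hBy hDy
    have hCB : MNProv Ax (C.box.imp B.box) :=
      MNProv.of_entails (Δ := {C.box.imp D.box, D.box.imp B.box})
        (by simp [hΦ.box_imp_box hD, hDB.rm]) fun v hv h => by
          simp only [Finset.mem_insert, Finset.mem_singleton, forall_eq_or_imp, forall_eq,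
            hv.imp_iff] at h ⊢
          tauto
    exact hBx (x.mem_of_provable_imp hC hB hCB hCx)

theorem sat_canonicalFrame_iff [Nonempty (World Ax Γ)] (hΦ : IsDemand Ax Φ)
    (hΓ : SubformulaClosed Γ) {B : Fml} (hB : B ∈ Γ) (x : World Ax Γ) :
    (canonicalFrame Ax Γ Φ).sat canonicalVal x B ↔ B ∈ x := by
  induction B generalizing x with
  | var n => rfl
  | bot => simpa [MNFrame.sat] using x.bot_not_mem
  | imp B C ihB ihC =>
    rw [x.imp_mem_iff (hΓ.imp_left hB) (hΓ.imp_right hB) hB, ← ihB (hΓ.imp_left hB),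
      ← ihC (hΓ.imp_right hB)]
    rfl
  | box B ih =>
    constructor
    · intro h
      by_contra hBx
      obtain ⟨y, hy, hyB⟩ := h _ (canonicalRel_setOf_not_mem hΦ hΓ hB hBx)
      exact hy ((ih (hΓ.box hB) y).1 hyB)
    · intro hBx V hV
      obtain ⟨y, hy, hyB⟩ := hV.2 B hB hBx B (hΦ.self_mem B)
      exact ⟨y, hy, (ih (hΓ.box hB) y).2 hyB⟩

theorem not_sat_canonicalFrame {A : Fml} [Nonempty (World Ax A.sf)] (hΦ : IsDemand Ax Φ)
    {x : World Ax A.sf} (hx : A ∉ x) : ¬(canonicalFrame Ax A.sf Φ).sat canonicalVal x A :=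
  (sat_canonicalFrame_iff hΦ (subformulaClosed_sf A) (Fml.mem_sf_self A) x).not.2 hx

theorem canonicalFrame_isTransitive [Nonempty (World Ax Γ)] (hΦ : ∀ B, B.box ∈ Φ B) :
    (canonicalFrame Ax Γ Φ).IsTransitive := by
  rintro x V U ⟨⟨y₀, hy₀⟩, hxV⟩ hU
  refine ⟨(hU y₀ hy₀).1.mono (Set.subset_biUnion_of_mem hy₀), fun B hB hBx D hD => ?_⟩
  obtain ⟨y, hy, hBy⟩ := hxV B hB hBx B.box (hΦ B)
  obtain ⟨z, hz, hDz⟩ := (hU y hy).2 B hB hBy D hD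
  exact ⟨z, Set.mem_biUnion hy hz, hDz⟩

theorem canonicalRel_univ (hP : MNProv Ax Fml.bot.box.neg) (hΦ : IsDemand Ax Φ)
    (hΓ : SubformulaClosed Γ) (x : World Ax Γ) : canonicalRel Φ x Set.univ := by
  refine ⟨⟨x, trivial⟩, fun B hB hBx D hD => ?_⟩
  by_contra! hall
  have hDneg : MNProv Ax D.neg :=
    provable_neg_of_forall_not_mem (hΦ.mem_of_box_mem hΓ hB hD) fun y => hall y trivial
  have hBneg : MNProv Ax B.box.neg :=
    MNProv.of_entails (Δ := {B.box.imp D.box, D.box.imp Fml.bot.box, Fml.bot.box.neg})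
      (by simp [hΦ.box_imp_box hD, hDneg.rm, hP]) fun v hv h => by
        simp only [Finset.mem_insert, Finset.mem_singleton, forall_eq_or_imp, forall_eq,
          hv.imp_iff, hv.neg_iff] at h ⊢
        tauto
  exact x.not_mem_of_provable_neg hB hBneg hBx

theorem canonicalFrame_isMNP [Nonempty (World Ax Γ)] (hP : MNProv Ax Fml.bot.box.neg)
    (hΦ : IsDemand Ax Φ) (hΓ : SubformulaClosed Γ) : (canonicalFrame Ax Γ Φ).IsMNP :=
  fun x => ⟨Set.univ, canonicalRel_univ hP hΦ hΓ x⟩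

theorem provable_not_box_bot (hD : ∀ B : Fml, MNProv Ax (B.box.and B.neg.box).neg) :
    MNProv Ax Fml.bot.box.neg := by
  have h : MNProv Ax (Fml.bot.imp Fml.bot.neg) :=
    MNProv.of_entails (Δ := ∅) (by simp) fun v hv _ => by simp [hv.imp_iff, hv.bot]
  refine MNProv.of_entails
    (Δ := {Fml.bot.box.imp Fml.bot.neg.box, (Fml.bot.box.and Fml.bot.neg.box).neg})
    (by simp [hD, h.rm]) fun v hv h => ?_
  simp only [Finset.mem_insert, Finset.mem_singleton, forall_eq_or_imp, forall_eq, Fml.and,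
    hv.imp_iff, hv.neg_iff] at h ⊢
  tauto

theorem canonicalRel_or_compl (hD : ∀ B : Fml, MNProv Ax (B.box.and B.neg.box).neg)
    (hΦ : IsDemand Ax Φ) (hΓ : SubformulaClosed Γ) (x : World Ax Γ) {V : Set (World Ax Γ)}
    (hV : V.Nonempty) (hVc : Vᶜ.Nonempty) : canonicalRel Φ x V ∨ canonicalRel Φ x Vᶜ := by
  by_contra! h
  obtain ⟨B, hB, hBx, D₁, hD₁, hV₁⟩ :
      ∃ B : Fml, B.box ∈ Γ ∧ B.box ∈ x ∧ ∃ D₁ ∈ Φ B, ∀ y ∈ V, D₁ ∉ y := by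
    simpa [canonicalRel, hV] using h.1
  obtain ⟨C, hC, hCx, D₂, hD₂, hV₂⟩ :
      ∃ C : Fml, C.box ∈ Γ ∧ C.box ∈ x ∧ ∃ D₂ ∈ Φ C, ∀ y ∈ Vᶜ, D₂ ∉ y := by
    simpa [canonicalRel, hVc] using h.2
  have hsep : MNProv Ax (D₁.imp D₂.neg) :=
    provable_imp_neg_of_forall_mem (hΦ.mem_of_box_mem hΓ hB hD₁) (hΦ.mem_of_box_mem hΓ hC hD₂)
      fun y hy₁ hy₂ => by_cases (fun hyV : y ∈ V => hV₁ y hyV hy₁) fun hyV => hV₂ y hyV hy₂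
  have hBC : MNProv Ax (B.box.imp C.box.neg) :=
    MNProv.of_entails (Δ := {B.box.imp D₁.box, C.box.imp D₂.box, D₁.box.imp D₂.neg.box,
        (D₂.box.and D₂.neg.box).neg})
      (by simp [hΦ.box_imp_box hD₁, hΦ.box_imp_box hD₂, hsep.rm, hD]) fun v hv h => by
        simp only [Finset.mem_insert, Finset.mem_singleton, forall_eq_or_imp, forall_eq, Fml.and,
          hv.imp_iff, hv.neg_iff] at h ⊢
        tauto
  exact x.not_mem_of_provable_imp_neg hB hC hBC hBx hCx

theorem canonicalFrame_isMND [Nonempty (World Ax Γ)]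
    (hD : ∀ B : Fml, MNProv Ax (B.box.and B.neg.box).neg) (hΦ : IsDemand Ax Φ)
    (hΓ : SubformulaClosed Γ) : (canonicalFrame Ax Γ Φ).IsMND := by
  intro x V
  have huniv := canonicalRel_univ (provable_not_box_bot hD) hΦ hΓ x
  rcases V.eq_empty_or_nonempty with rfl | hV
  · exact .inr (by rwa [Set.compl_empty])
  rcases Vᶜ.eq_empty_or_nonempty with hVc | hVc
  · exact .inl (by rwa [← compl_compl V, hVc, Set.compl_empty])
  exact canonicalRel_or_compl hD hΦ hΓ x hV hVc

end CanonicalFrame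

/-- For each L among MN, MNF, MNP, MND, MNPF, MNDF, if A is not a
theorem of L then A is refuted at some world of some satisfaction relation on a
finite MN-frame of the corresponding frame class. -/
theorem stmt18 :
    (∀ A : Fml, ¬ MN A → ∃ (W : Type) (_ : Finite W) (F : MNFrame W)
      (Sat : W → Fml → Prop) (_ : IsSat F Sat) (x : W), ¬ Sat x A) ∧
    (∀ A : Fml, ¬ MNF A → ∃ (W : Type) (_ : Finite W) (F : MNFrame W)
      (_ : F.IsTransitive) (Sat : W → Fml → Prop) (_ : IsSat F Sat) (x : W), ¬ Sat x A) ∧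
    (∀ A : Fml, ¬ MNP A → ∃ (W : Type) (_ : Finite W) (F : MNFrame W)
      (_ : F.IsMNP) (Sat : W → Fml → Prop) (_ : IsSat F Sat) (x : W), ¬ Sat x A) ∧
    (∀ A : Fml, ¬ MND A → ∃ (W : Type) (_ : Finite W) (F : MNFrame W)
      (_ : F.IsMND) (Sat : W → Fml → Prop) (_ : IsSat F Sat) (x : W), ¬ Sat x A) ∧
    (∀ A : Fml, ¬ MNPF A → ∃ (W : Type) (_ : Finite W) (F : MNFrame W)
      (_ : F.IsTransitive) (_ : F.IsMNP) (Sat : W → Fml → Prop) (_ : IsSat F Sat)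
      (x : W), ¬ Sat x A) ∧
    (∀ A : Fml, ¬ MNDF A → ∃ (W : Type) (_ : Finite W) (F : MNFrame W)
      (_ : F.IsTransitive) (_ : F.IsMND) (Sat : W → Fml → Prop) (_ : IsSat F Sat)
      (x : W), ¬ Sat x A) := by
  have hΓ := subformulaClosed_sf
  refine ⟨fun A hA => ?_, fun A hA => ?_, fun A hA => ?_, fun A hA => ?_, fun A hA => ?_,
    fun A hA => ?_⟩ <;>
    obtain ⟨x, hx⟩ := exists_world_not_mem hA (Fml.mem_sf_self A) <;>
    have : Nonempty (World _ A.sf) := ⟨x⟩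
  · exact ⟨_, inferInstance, canonicalFrame _ _ _, _, MNFrame.isSat_sat _ _, x,
      not_sat_canonicalFrame .singleton hx⟩
  · have h4 : ∀ B : Fml, MNProv AxF (B.box.imp B.box.box) := fun B => .ax ⟨B, rfl⟩
    exact ⟨_, inferInstance, canonicalFrame _ _ _, canonicalFrame_isTransitive (by simp), _,
      MNFrame.isSat_sat _ _, x, not_sat_canonicalFrame (.pair h4) hx⟩
  · have hP : MNProv AxP Fml.bot.box.neg := .ax rfl
    exact ⟨_, inferInstance, canonicalFrame _ _ _, canonicalFrame_isMNP hP .singleton (hΓ A), _,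
      MNFrame.isSat_sat _ _, x, not_sat_canonicalFrame .singleton hx⟩
  · exact ⟨_, inferInstance, canonicalFrame _ _ _,
      canonicalFrame_isMND (fun B => .ax ⟨B, rfl⟩) .singleton (hΓ A), _,
      MNFrame.isSat_sat _ _, x, not_sat_canonicalFrame .singleton hx⟩
  · have h4 : ∀ B : Fml, MNProv (fun A => AxP A ∨ AxF A) (B.box.imp B.box.box) :=
      fun B => .ax (.inr ⟨B, rfl⟩)
    exact ⟨_, inferInstance, canonicalFrame _ _ _, canonicalFrame_isTransitive (by simp),
      canonicalFrame_isMNP (.ax (.inl rfl)) (.pair h4) (hΓ A), _,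
      MNFrame.isSat_sat _ _, x, not_sat_canonicalFrame (.pair h4) hx⟩
  · have h4 : ∀ B : Fml, MNProv (fun A => AxD A ∨ AxF A) (B.box.imp B.box.box) :=
      fun B => .ax (.inr ⟨B, rfl⟩)
    exact ⟨_, inferInstance, canonicalFrame _ _ _, canonicalFrame_isTransitive (by simp),
      canonicalFrame_isMND (fun B => .ax (.inl ⟨B, rfl⟩)) (.pair h4) (hΓ A), _,
      MNFrame.isSat_sat _ _, x, not_sat_canonicalFrame (.pair h4) hx⟩
end
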